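/- arXiv:1712.09215 — 7 statements merged into one kernel-verified Lean document; each statement's English description precedes it below -/
import Mathlib

section
/- (Proposition 2.4, equivalence of the Lee–Pomeransky and Schwinger parametric representations.) Let ν ∈ ℝ^N and d ∈ ℝ with superficial degree of convergence ω := (Σ_{i=1}^N ν_i) − L·d/2 satisfying 0 < ω < d/2. Then Γ(d/2) · ∫_{(0,∞)^N} (∏_{i=1}^N x_i^{ν_i−1}) · (U(x)+F(x))^{−d/2} dx = Γ(d/2 − ω) · ∫_{(0,∞)^N} (∏_{i=1}^N x_i^{ν_i−1}) · U(x)^{−d/2} · exp(−F(x)/U(x)) dx, as an identity in [0,∞] (in particular, one side is finite exactly when the other is). -/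
open MeasureTheory Real Set
open scoped ENNReal

/-!
Both sides equal `L Γ(ω) ∫ x^(ν-1) e^(-U) F^(-ω) dx`. On each side write
`Γ(α) A^(-α) = ∫₀^∞ u^(α-1) e^(-uA) du`, with `A = U + F`, `α = d/2` (Lee–Pomeransky) or
`A = U`, `α = d/2 - ω` (Schwinger, where `U^(-ω) e^(-F/U)` stays in the integrand), exchange the
integrals and rescale `x = u^(-1/L) y`. Homogeneity turns `u U(x)` into `U(y)`, and `u F(x)`,
resp. `F(x)/U(x)`, into `u^(-1/L)` times the same expression in `y`, leaving only a power of `u`.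
After the substitution `s = u^(-1/L)` the `u`-integral is a Gamma integral again, giving
`L Γ(ω) F^(-ω)`, resp. `L Γ(ω) (F/U)^(-ω)`.
-/

theorem lintegral_rpow_mul_exp_neg_mul_Ioi {s a : ℝ} (hs : 0 < s) (ha : 0 < a) :
    ∫⁻ u in Ioi (0 : ℝ), ENNReal.ofReal (u ^ (s - 1)) * ENNReal.ofReal (exp (-(a * u))) =
      ENNReal.ofReal (Gamma s * a ^ (-s)) := by
  have hint : IntegrableOn (fun u : ℝ => u ^ (s - 1) * exp (-(a * u))) (Ioi 0) := by
    simpa [rpow_one, neg_mul] using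
      integrableOn_rpow_mul_exp_neg_mul_rpow (p := 1) (by linarith) one_pos ha
  have hnonneg : 0 ≤ᵐ[volume.restrict (Ioi 0)] fun u : ℝ => u ^ (s - 1) * exp (-(a * u)) :=
    ae_restrict_of_forall_mem measurableSet_Ioi fun u (hu : 0 < u) => by positivity
  simp_rw [← ENNReal.ofReal_mul' (exp_pos _).le]
  rw [← ofReal_integral_eq_lintegral_ofReal hint hnonneg, integral_rpow_mul_exp_neg_mul_Ioi hs ha,
    one_div, inv_rpow ha.le, ← rpow_neg ha.le, mul_comm]

theorem lintegral_comp_rpow_Ioi (g : ℝ → ℝ≥0∞) {p : ℝ} (hp : p ≠ 0) :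
    ∫⁻ x in Ioi 0, ENNReal.ofReal (|p| * x ^ (p - 1)) * g (x ^ p) = ∫⁻ y in Ioi 0, g y := by
  have himage : (· ^ p) '' Ioi (0 : ℝ) = Ioi 0 := by
    ext y
    refine ⟨?_, fun hy : 0 < y => ⟨y ^ p⁻¹, rpow_pos_of_pos hy _, rpow_inv_rpow hy.le hp⟩⟩
    rintro ⟨x, hx, rfl⟩
    exact rpow_pos_of_pos hx p
  conv_rhs => rw [← himage, lintegral_image_eq_lintegral_abs_deriv_mul measurableSet_Ioi
    (fun x hx => (hasDerivAt_rpow_const (Or.inl (mem_Ioi.mp hx).ne')).hasDerivWithinAt)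
    ((rpow_left_injOn hp).mono fun x (hx : 0 < x) => hx.le)]
  refine setLIntegral_congr_fun measurableSet_Ioi fun x (hx : 0 < x) => ?_
  rw [abs_mul, abs_of_pos (rpow_pos_of_pos hx _)]

section GammaRepresentation

variable {X : Type*} [MeasurableSpace X] {μ : Measure X} [SFinite μ]

theorem gamma_mul_lintegral_mul_rpow_neg {Φ : X → ℝ≥0∞} {A : X → ℝ} (hΦ : AEMeasurable Φ μ)
    (hA : AEMeasurable A μ) (hA_pos : ∀ᵐ x ∂μ, 0 < A x) {α : ℝ} (hα : 0 < α) :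
    ENNReal.ofReal (Gamma α) * ∫⁻ x, Φ x * ENNReal.ofReal (A x ^ (-α)) ∂μ =
      ∫⁻ u in Ioi (0 : ℝ), ENNReal.ofReal (u ^ (α - 1)) *
        (∫⁻ x, Φ x * ENNReal.ofReal (exp (-(A x * u))) ∂μ) := by
  calc ENNReal.ofReal (Gamma α) * ∫⁻ x, Φ x * ENNReal.ofReal (A x ^ (-α)) ∂μ
      = ∫⁻ x, Φ x * (∫⁻ u in Ioi (0 : ℝ), ENNReal.ofReal (u ^ (α - 1)) *
          ENNReal.ofReal (exp (-(A x * u)))) ∂μ := by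
        rw [← lintegral_const_mul' _ _ ENNReal.ofReal_ne_top]
        refine lintegral_congr_ae (hA_pos.mono fun x hx => ?_)
        dsimp only
        rw [lintegral_rpow_mul_exp_neg_mul_Ioi hα hx, ENNReal.ofReal_mul (Gamma_pos_of_pos hα).le]
        ring
    _ = ∫⁻ x, (∫⁻ u in Ioi (0 : ℝ), ENNReal.ofReal (u ^ (α - 1)) *
          (Φ x * ENNReal.ofReal (exp (-(A x * u))))) ∂μ := by
        refine lintegral_congr fun x => ?_
        rw [← lintegral_const_mul _ (by fun_prop)]
        exact lintegral_congr fun u => by ring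
    _ = ∫⁻ u in Ioi (0 : ℝ), ∫⁻ x, ENNReal.ofReal (u ^ (α - 1)) *
          (Φ x * ENNReal.ofReal (exp (-(A x * u)))) ∂μ := by
        refine lintegral_lintegral_swap ?_
        have := hΦ.comp_fst (ν := volume.restrict (Ioi (0 : ℝ)))
        have := hA.comp_fst (ν := volume.restrict (Ioi (0 : ℝ)))
        fun_prop
    _ = _ := lintegral_congr fun u => lintegral_const_mul' _ _ ENNReal.ofReal_ne_top

theorem gamma_mul_lintegral_mul_rpow_neg_eq_of_scaling {Φ Φ' : X → ℝ≥0∞} {A Ψ : X → ℝ}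
    (hΦ : AEMeasurable Φ μ) (hA : AEMeasurable A μ) (hA_pos : ∀ᵐ x ∂μ, 0 < A x)
    (hΦ' : AEMeasurable Φ' μ) (hΨ : AEMeasurable Ψ μ) (hΨ_pos : ∀ᵐ x ∂μ, 0 < Ψ x)
    {α w L : ℝ} (hα : 0 < α) (hw : 0 < w) (hL : 0 < L)
    (hscale : ∀ u : ℝ, 0 < u → ∫⁻ x, Φ x * ENNReal.ofReal (exp (-(A x * u))) ∂μ =
      ENNReal.ofReal (u ^ (-(α + w / L))) *
        ∫⁻ x, Φ' x * ENNReal.ofReal (exp (-(Ψ x * u ^ (-L⁻¹)))) ∂μ) :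
    ENNReal.ofReal (Gamma α) * ∫⁻ x, Φ x * ENNReal.ofReal (A x ^ (-α)) ∂μ =
      ENNReal.ofReal (L * Gamma w) * ∫⁻ x, Φ' x * ENNReal.ofReal (Ψ x ^ (-w)) ∂μ := by
  set J : ℝ → ℝ≥0∞ := fun s => ∫⁻ x, Φ' x * ENNReal.ofReal (exp (-(Ψ x * s))) ∂μ
  have hweight : ∀ u : ℝ, 0 < u → u ^ (α - 1) * u ^ (-(α + w / L)) =
      |-L⁻¹| * u ^ (-L⁻¹ - 1) * (L * (u ^ (-L⁻¹)) ^ (w - 1)) := by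
    intro u hu
    rw [abs_neg, abs_inv, abs_of_pos hL, ← rpow_mul hu.le, ← rpow_add hu,
      mul_mul_mul_comm, inv_mul_cancel₀ hL.ne', one_mul, ← rpow_add hu]
    congr 1
    field_simp
    ring
  calc ENNReal.ofReal (Gamma α) * ∫⁻ x, Φ x * ENNReal.ofReal (A x ^ (-α)) ∂μ
      = ∫⁻ u in Ioi (0 : ℝ), ENNReal.ofReal (u ^ (α - 1)) *
          (∫⁻ x, Φ x * ENNReal.ofReal (exp (-(A x * u))) ∂μ) :=
        gamma_mul_lintegral_mul_rpow_neg hΦ hA hA_pos hα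
    _ = ∫⁻ u in Ioi (0 : ℝ), ENNReal.ofReal (|-L⁻¹| * u ^ (-L⁻¹ - 1)) *
          (ENNReal.ofReal L * (ENNReal.ofReal ((u ^ (-L⁻¹)) ^ (w - 1)) * J (u ^ (-L⁻¹)))) := by
        refine setLIntegral_congr_fun measurableSet_Ioi fun u (hu : 0 < u) => ?_
        rw [hscale u hu, ← mul_assoc, ← ENNReal.ofReal_mul (rpow_pos_of_pos hu _).le,
          hweight u hu, ENNReal.ofReal_mul (by positivity), ENNReal.ofReal_mul hL.le]
        ring
    _ = ∫⁻ s in Ioi (0 : ℝ), ENNReal.ofReal L * (ENNReal.ofReal (s ^ (w - 1)) * J s) :=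
        lintegral_comp_rpow_Ioi (fun s => ENNReal.ofReal L * (ENNReal.ofReal (s ^ (w - 1)) * J s))
          (neg_ne_zero.mpr (inv_ne_zero hL.ne'))
    _ = ENNReal.ofReal (L * Gamma w) * ∫⁻ x, Φ' x * ENNReal.ofReal (Ψ x ^ (-w)) ∂μ := by
        rw [lintegral_const_mul' _ _ ENNReal.ofReal_ne_top,
          ← gamma_mul_lintegral_mul_rpow_neg hΦ' hΨ hΨ_pos hw, ENNReal.ofReal_mul hL.le, mul_assoc]

end GammaRepresentation

theorem MeasureTheory.Measure.lintegral_comp_smul {E : Type*} [NormedAddCommGroup E]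
    [NormedSpace ℝ E] [MeasurableSpace E] [BorelSpace E] [FiniteDimensional ℝ E]
    (μ : Measure E) [μ.IsAddHaarMeasure] (f : E → ℝ≥0∞) {R : ℝ} (hR : R ≠ 0) :
    ∫⁻ x, f (R • x) ∂μ = ENNReal.ofReal |(R ^ Module.finrank ℝ E)⁻¹| * ∫⁻ x, f x ∂μ := by
  let e : E ≃ᵐ E := (Homeomorph.smul (Units.mk0 R hR)).toMeasurableEquiv
  have he : Measure.map e μ = Measure.map (R • ·) μ := rfl
  calc ∫⁻ x, f (R • x) ∂μ = ∫⁻ x, f x ∂(Measure.map e μ) := (lintegral_map_equiv f e).symm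
    _ = _ := by rw [he, map_addHaar_smul μ hR, lintegral_smul_measure, smul_eq_mul]

def positiveOrthant (ι : Type*) : Set (ι → ℝ) := {x | ∀ i, 0 < x i}

section PositiveOrthant

variable {ι : Type*}

theorem measurableSet_positiveOrthant [Countable ι] : MeasurableSet (positiveOrthant ι) := by
  simp only [positiveOrthant, ofPred_forall]
  exact MeasurableSet.iInter fun i => measurableSet_lt measurable_const (measurable_pi_apply i)

theorem smul_mem_positiveOrthant_iff {R : ℝ} (hR : 0 < R) {x : ι → ℝ} :
    R • x ∈ positiveOrthant ι ↔ x ∈ positiveOrthant ι :=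
  forall_congr' fun i => by simp [Pi.smul_apply, smul_eq_mul, mul_pos_iff_of_pos_left hR]

variable [Fintype ι]

theorem continuousOn_monomial (ν : ι → ℝ) :
    ContinuousOn (fun x : ι → ℝ => ∏ i, x i ^ (ν i - 1)) (positiveOrthant ι) :=
  continuousOn_finsetProd _ fun i _ =>
    (continuous_apply i).continuousOn.rpow_const fun _ hx => Or.inl (hx i).ne'

theorem monomial_nonneg (ν : ι → ℝ) {x : ι → ℝ} (hx : x ∈ positiveOrthant ι) :
    0 ≤ ∏ i, x i ^ (ν i - 1) :=
  Finset.prod_nonneg fun i _ => rpow_nonneg (hx i).le _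

theorem setLIntegral_positiveOrthant_comp_smul (f : (ι → ℝ) → ℝ≥0∞) {R : ℝ} (hR : 0 < R) :
    ∫⁻ x in positiveOrthant ι, f x =
      ENNReal.ofReal (R ^ Fintype.card ι) * ∫⁻ y in positiveOrthant ι, f (R • y) := by
  have hind : (fun y => (positiveOrthant ι).indicator f (R • y)) =
      fun y => (positiveOrthant ι).indicator (fun y => f (R • y)) y := by
    ext y
    by_cases hy : y ∈ positiveOrthant ι
    · simp [hy, (smul_mem_positiveOrthant_iff hR).mpr hy]
    · simp [hy, mt (smul_mem_positiveOrthant_iff hR).mp hy]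
  rw [← lintegral_indicator measurableSet_positiveOrthant,
    ← lintegral_indicator measurableSet_positiveOrthant, ← hind,
    Measure.lintegral_comp_smul _ _ hR.ne', Module.finrank_fintype_fun_eq_card,
    abs_of_pos (by positivity), ← mul_assoc, ← ENNReal.ofReal_mul (by positivity),
    mul_inv_cancel₀ (by positivity), ENNReal.ofReal_one, one_mul]

theorem setLIntegral_positiveOrthant_monomial_mul_comp_smul (ν : ι → ℝ) (f : (ι → ℝ) → ℝ≥0∞)
    {R : ℝ} (hR : 0 < R) :
    ∫⁻ x in positiveOrthant ι, ENNReal.ofReal (∏ i, x i ^ (ν i - 1)) * f x =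
      ENNReal.ofReal (R ^ ∑ i, ν i) *
        ∫⁻ y in positiveOrthant ι, ENNReal.ofReal (∏ i, y i ^ (ν i - 1)) * f (R • y) := by
  rw [setLIntegral_positiveOrthant_comp_smul _ hR,
    ← lintegral_const_mul' _ _ ENNReal.ofReal_ne_top,
    ← lintegral_const_mul' _ _ ENNReal.ofReal_ne_top]
  refine setLIntegral_congr_fun measurableSet_positiveOrthant fun y hy => ?_
  have hmonomial : ∏ i, (R • y) i ^ (ν i - 1) =
      R ^ (∑ i, ν i - Fintype.card ι) * ∏ i, y i ^ (ν i - 1) := by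
    have hsum : ∑ i, (ν i - 1) = ∑ i, ν i - Fintype.card ι := by
      simp [Finset.sum_sub_distrib]
    rw [← hsum, rpow_sum_of_pos hR, ← Finset.prod_mul_distrib]
    exact Finset.prod_congr rfl fun i _ => mul_rpow hR.le (hy i).le
  rw [hmonomial, ← mul_assoc, ENNReal.ofReal_mul (by positivity), ← mul_assoc,
    ← ENNReal.ofReal_mul (by positivity), ← rpow_natCast, ← rpow_add hR, add_sub_cancel, mul_assoc]

end PositiveOrthant

theorem rpow_neg_inv_natCast_pow {u : ℝ} (hu : 0 ≤ u) {L : ℕ} (hL : L ≠ 0) :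
    (u ^ (-(L : ℝ)⁻¹)) ^ L = u⁻¹ := by
  rw [rpow_neg hu, inv_pow, rpow_inv_natCast_pow hu hL]

section Homogeneous

variable {ι : Type*} [Fintype ι] {L : ℕ} {U F : (ι → ℝ) → ℝ}

theorem lintegral_monomial_mul_exp_neg_add_mul_eq (hL : L ≠ 0)
    (hUhom : ∀ t : ℝ, 0 < t → ∀ x ∈ positiveOrthant ι, U (t • x) = t ^ L * U x)
    (hFhom : ∀ t : ℝ, 0 < t → ∀ x ∈ positiveOrthant ι, F (t • x) = t ^ (L + 1) * F x)
    (ν : ι → ℝ) {u : ℝ} (hu : 0 < u) :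
    ∫⁻ x in positiveOrthant ι, ENNReal.ofReal (∏ i, x i ^ (ν i - 1)) *
        ENNReal.ofReal (exp (-((U x + F x) * u))) =
      ENNReal.ofReal (u ^ (-(∑ i, ν i) / L)) *
        ∫⁻ x in positiveOrthant ι, ENNReal.ofReal (∏ i, x i ^ (ν i - 1)) *
          ENNReal.ofReal (exp (-U x)) * ENNReal.ofReal (exp (-(F x * u ^ (-(L : ℝ)⁻¹)))) := by
  set R := u ^ (-(L : ℝ)⁻¹)
  have hR : 0 < R := rpow_pos_of_pos hu _
  have hRu : R ^ L * u = 1 := by rw [rpow_neg_inv_natCast_pow hu.le hL, inv_mul_cancel₀ hu.ne']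
  rw [setLIntegral_positiveOrthant_monomial_mul_comp_smul ν _ hR, ← rpow_mul hu.le,
    neg_mul, ← div_eq_inv_mul, neg_div]
  congr 1
  refine setLIntegral_congr_fun measurableSet_positiveOrthant fun x hx => ?_
  have hexponent : (U (R • x) + F (R • x)) * u = U x + F x * R := by
    rw [hUhom R hR x hx, hFhom R hR x hx, pow_succ]
    linear_combination (U x + R * F x) * hRu
  rw [hexponent, neg_add, exp_add, ENNReal.ofReal_mul (exp_pos _).le, mul_assoc]

theorem lintegral_monomial_mul_rpow_neg_mul_exp_neg_div_mul_eq (hL : L ≠ 0)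
    (hUpos : ∀ x ∈ positiveOrthant ι, 0 < U x)
    (hUhom : ∀ t : ℝ, 0 < t → ∀ x ∈ positiveOrthant ι, U (t • x) = t ^ L * U x)
    (hFhom : ∀ t : ℝ, 0 < t → ∀ x ∈ positiveOrthant ι, F (t • x) = t ^ (L + 1) * F x)
    (ν : ι → ℝ) (ω : ℝ) {u : ℝ} (hu : 0 < u) :
    ∫⁻ x in positiveOrthant ι, ENNReal.ofReal (∏ i, x i ^ (ν i - 1)) *
        ENNReal.ofReal (U x ^ (-ω)) * ENNReal.ofReal (exp (-(F x / U x))) *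
        ENNReal.ofReal (exp (-(U x * u))) =
      ENNReal.ofReal (u ^ (ω - (∑ i, ν i) / L)) *
        ∫⁻ x in positiveOrthant ι, ENNReal.ofReal (∏ i, x i ^ (ν i - 1)) *
          ENNReal.ofReal (U x ^ (-ω)) * ENNReal.ofReal (exp (-U x)) *
          ENNReal.ofReal (exp (-(F x / U x * u ^ (-(L : ℝ)⁻¹)))) := by
  set R := u ^ (-(L : ℝ)⁻¹)
  have hR : 0 < R := rpow_pos_of_pos hu _
  have hRL : R ^ L = u⁻¹ := rpow_neg_inv_natCast_pow hu.le hL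
  simp only [mul_assoc]
  rw [setLIntegral_positiveOrthant_monomial_mul_comp_smul ν _ hR,
    ← lintegral_const_mul' _ _ ENNReal.ofReal_ne_top,
    ← lintegral_const_mul' _ _ ENNReal.ofReal_ne_top]
  refine setLIntegral_congr_fun measurableSet_positiveOrthant fun x hx => ?_
  have hUx := hUpos x hx
  have hU : U (R • x) ^ (-ω) = u ^ ω * U x ^ (-ω) := by
    rw [hUhom R hR x hx, hRL, mul_rpow (inv_nonneg.mpr hu.le) hUx.le, inv_rpow hu.le,
      ← rpow_neg hu.le, neg_neg]
  have hFU : F (R • x) / U (R • x) = F x / U x * R := by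
    rw [hUhom R hR x hx, hFhom R hR x hx, pow_succ]
    field_simp
  have hUu : U (R • x) * u = U x := by
    rw [hUhom R hR x hx, hRL]
    field_simp
  have hconst : u ^ (ω - (∑ i, ν i) / L) = R ^ (∑ i, ν i) * u ^ ω := by
    rw [← rpow_mul hu.le, ← rpow_add hu]
    ring_nf
  rw [hU, hFU, hUu, hconst, ENNReal.ofReal_mul (by positivity), ENNReal.ofReal_mul (by positivity)]
  ring

theorem gamma_mul_lintegral_leePomeransky_eq (hL : L ≠ 0)
    (hUc : ContinuousOn U (positiveOrthant ι)) (hFc : ContinuousOn F (positiveOrthant ι))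
    (hUpos : ∀ x ∈ positiveOrthant ι, 0 < U x) (hFpos : ∀ x ∈ positiveOrthant ι, 0 < F x)
    (hUhom : ∀ t : ℝ, 0 < t → ∀ x ∈ positiveOrthant ι, U (t • x) = t ^ L * U x)
    (hFhom : ∀ t : ℝ, 0 < t → ∀ x ∈ positiveOrthant ι, F (t • x) = t ^ (L + 1) * F x)
    (ν : ι → ℝ) {s ω : ℝ} (hω : ω = ∑ i, ν i - L * s) (hs : 0 < s) (hω_pos : 0 < ω) :
    ENNReal.ofReal (Gamma s) *
        ∫⁻ x in positiveOrthant ι, ENNReal.ofReal ((∏ i, x i ^ (ν i - 1)) * (U x + F x) ^ (-s)) =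
      ENNReal.ofReal (L * Gamma ω) *
        ∫⁻ x in positiveOrthant ι,
          ENNReal.ofReal ((∏ i, x i ^ (ν i - 1)) * exp (-U x) * F x ^ (-ω)) := by
  have hS := measurableSet_positiveOrthant (ι := ι)
  have hW := ((continuousOn_monomial ν).aemeasurable (μ := volume) hS).ennreal_ofReal
  have hU := hUc.aemeasurable (μ := volume) hS
  have hF := hFc.aemeasurable (μ := volume) hS
  have hexponent : -(∑ i, ν i) / L = -(s + ω / L) := by
    rw [hω]
    field_simp
    ring
  have key := gamma_mul_lintegral_mul_rpow_neg_eq_of_scaling (A := fun x => U x + F x)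
    (Φ' := fun x => ENNReal.ofReal (∏ i, x i ^ (ν i - 1)) * ENNReal.ofReal (exp (-U x)))
    hW (by fun_prop) (ae_restrict_of_forall_mem hS fun x hx => add_pos (hUpos x hx) (hFpos x hx))
    (by fun_prop) hF (ae_restrict_of_forall_mem hS hFpos) hs hω_pos
    (Nat.cast_pos.mpr (Nat.pos_of_ne_zero hL))
    fun u hu => by rw [lintegral_monomial_mul_exp_neg_add_mul_eq hL hUhom hFhom ν hu, hexponent]
  calc ENNReal.ofReal (Gamma s) * ∫⁻ x in positiveOrthant ι,
        ENNReal.ofReal ((∏ i, x i ^ (ν i - 1)) * (U x + F x) ^ (-s))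
      = ENNReal.ofReal (Gamma s) * ∫⁻ x in positiveOrthant ι,
          ENNReal.ofReal (∏ i, x i ^ (ν i - 1)) * ENNReal.ofReal ((U x + F x) ^ (-s)) := by
        congr 1
        exact setLIntegral_congr_fun hS fun x hx => ENNReal.ofReal_mul (monomial_nonneg ν hx)
    _ = _ := key
    _ = _ := by
        congr 1
        refine setLIntegral_congr_fun hS fun x hx => ?_
        rw [← ENNReal.ofReal_mul (monomial_nonneg ν hx),
          ← ENNReal.ofReal_mul (mul_nonneg (monomial_nonneg ν hx) (exp_pos _).le)]

theorem gamma_mul_lintegral_schwinger_eq (hL : L ≠ 0)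
    (hUc : ContinuousOn U (positiveOrthant ι)) (hFc : ContinuousOn F (positiveOrthant ι))
    (hUpos : ∀ x ∈ positiveOrthant ι, 0 < U x) (hFpos : ∀ x ∈ positiveOrthant ι, 0 < F x)
    (hUhom : ∀ t : ℝ, 0 < t → ∀ x ∈ positiveOrthant ι, U (t • x) = t ^ L * U x)
    (hFhom : ∀ t : ℝ, 0 < t → ∀ x ∈ positiveOrthant ι, F (t • x) = t ^ (L + 1) * F x)
    (ν : ι → ℝ) {s ω : ℝ} (hω : ω = ∑ i, ν i - L * s) (hω_pos : 0 < ω) (hωs : ω < s) :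
    ENNReal.ofReal (Gamma (s - ω)) *
        ∫⁻ x in positiveOrthant ι,
          ENNReal.ofReal ((∏ i, x i ^ (ν i - 1)) * U x ^ (-s) * exp (-(F x / U x))) =
      ENNReal.ofReal (L * Gamma ω) *
        ∫⁻ x in positiveOrthant ι,
          ENNReal.ofReal ((∏ i, x i ^ (ν i - 1)) * exp (-U x) * F x ^ (-ω)) := by
  have hS := measurableSet_positiveOrthant (ι := ι)
  have hW := ((continuousOn_monomial ν).aemeasurable (μ := volume) hS).ennreal_ofReal
  have hU := hUc.aemeasurable (μ := volume) hS
  have hF := hFc.aemeasurable (μ := volume) hS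
  have hexponent : ω - (∑ i, ν i) / L = -(s - ω + ω / L) := by
    rw [hω]
    field_simp
    ring
  have key := gamma_mul_lintegral_mul_rpow_neg_eq_of_scaling (A := U)
    (Φ := fun x => ENNReal.ofReal (∏ i, x i ^ (ν i - 1)) * ENNReal.ofReal (U x ^ (-ω)) *
      ENNReal.ofReal (exp (-(F x / U x))))
    (Φ' := fun x => ENNReal.ofReal (∏ i, x i ^ (ν i - 1)) * ENNReal.ofReal (U x ^ (-ω)) *
      ENNReal.ofReal (exp (-U x)))
    (Ψ := fun x => F x / U x)
    (by fun_prop) hU (ae_restrict_of_forall_mem hS hUpos) (by fun_prop) (by fun_prop)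
    (ae_restrict_of_forall_mem hS fun x hx => div_pos (hFpos x hx) (hUpos x hx))
    (sub_pos.mpr hωs) hω_pos (Nat.cast_pos.mpr (Nat.pos_of_ne_zero hL))
    fun u hu => by
      rw [lintegral_monomial_mul_rpow_neg_mul_exp_neg_div_mul_eq hL hUpos hUhom hFhom ν ω hu,
        hexponent]
  calc ENNReal.ofReal (Gamma (s - ω)) * ∫⁻ x in positiveOrthant ι,
        ENNReal.ofReal ((∏ i, x i ^ (ν i - 1)) * U x ^ (-s) * exp (-(F x / U x)))
      = ENNReal.ofReal (Gamma (s - ω)) * ∫⁻ x in positiveOrthant ι,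
          ENNReal.ofReal (∏ i, x i ^ (ν i - 1)) * ENNReal.ofReal (U x ^ (-ω)) *
            ENNReal.ofReal (exp (-(F x / U x))) * ENNReal.ofReal (U x ^ (-(s - ω))) := by
        congr 1
        refine setLIntegral_congr_fun hS fun x hx => ?_
        have hUx := hUpos x hx
        have hWx := monomial_nonneg ν hx
        rw [← ENNReal.ofReal_mul hWx, ← ENNReal.ofReal_mul (by positivity),
          ← ENNReal.ofReal_mul (by positivity), show -s = -ω + -(s - ω) by ring, rpow_add hUx]
        ring_nf
    _ = _ := key
    _ = _ := by
        congr 1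
        refine setLIntegral_congr_fun hS fun x hx => ?_
        have hUx := hUpos x hx
        have hFx := hFpos x hx
        have hWx := monomial_nonneg ν hx
        rw [← ENNReal.ofReal_mul hWx, ← ENNReal.ofReal_mul (by positivity),
          ← ENNReal.ofReal_mul (by positivity), div_rpow hFx.le hUx.le]
        field_simp

end Homogeneous

theorem stmt_2_general {N L : ℕ} (hL : 1 ≤ L)
    (U F : (Fin N → ℝ) → ℝ)
    (hUcont : ContinuousOn U {x : Fin N → ℝ | ∀ i, 0 < x i})
    (hFcont : ContinuousOn F {x : Fin N → ℝ | ∀ i, 0 < x i})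
    (hUpos : ∀ x ∈ {x : Fin N → ℝ | ∀ i, 0 < x i}, 0 < U x)
    (hFpos : ∀ x ∈ {x : Fin N → ℝ | ∀ i, 0 < x i}, 0 < F x)
    (hUhom : ∀ t : ℝ, 0 < t → ∀ x ∈ {x : Fin N → ℝ | ∀ i, 0 < x i},
      U (t • x) = t ^ L * U x)
    (hFhom : ∀ t : ℝ, 0 < t → ∀ x ∈ {x : Fin N → ℝ | ∀ i, 0 < x i},
      F (t • x) = t ^ (L + 1) * F x)
    (ν : Fin N → ℝ) (d : ℝ)
    (hω₁ : 0 < (∑ i, ν i) - (L : ℝ) * d / 2)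
    (hω₂ : (∑ i, ν i) - (L : ℝ) * d / 2 < d / 2) :
    ENNReal.ofReal (Real.Gamma (d / 2)) *
        ∫⁻ x in {x : Fin N → ℝ | ∀ i, 0 < x i},
          ENNReal.ofReal ((∏ i, x i ^ (ν i - 1)) * (U x + F x) ^ (-(d / 2)))
      = ENNReal.ofReal (Real.Gamma (d / 2 - ((∑ i, ν i) - (L : ℝ) * d / 2))) *
        ∫⁻ x in {x : Fin N → ℝ | ∀ i, 0 < x i},
          ENNReal.ofReal ((∏ i, x i ^ (ν i - 1)) * U x ^ (-(d / 2)) *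
            Real.exp (-(F x / U x))) := by
  have hL0 : L ≠ 0 := by omega
  have hω : (∑ i, ν i) - (L : ℝ) * d / 2 = ∑ i, ν i - L * (d / 2) := by ring
  exact (gamma_mul_lintegral_leePomeransky_eq hL0 hUcont hFcont hUpos hFpos hUhom hFhom ν hω
    (hω₁.trans hω₂) hω₁).trans
      (gamma_mul_lintegral_schwinger_eq hL0 hUcont hFcont hUpos hFpos hUhom hFhom ν hω hω₁ hω₂).symm

/-- Proposition 2.4: equivalence of the Lee–Pomeransky and Schwinger parametric
representations, as an identity in `[0,∞]`. -/
theorem stmt_2 {N L : ℕ} (hN : 1 ≤ N) (hL : 1 ≤ L)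
    (U F : (Fin N → ℝ) → ℝ)
    (hUcont : ContinuousOn U {x : Fin N → ℝ | ∀ i, 0 < x i})
    (hFcont : ContinuousOn F {x : Fin N → ℝ | ∀ i, 0 < x i})
    (hUpos : ∀ x ∈ {x : Fin N → ℝ | ∀ i, 0 < x i}, 0 < U x)
    (hFpos : ∀ x ∈ {x : Fin N → ℝ | ∀ i, 0 < x i}, 0 < F x)
    (hUhom : ∀ t : ℝ, 0 < t → ∀ x ∈ {x : Fin N → ℝ | ∀ i, 0 < x i},
      U (t • x) = t ^ L * U x)
    (hFhom : ∀ t : ℝ, 0 < t → ∀ x ∈ {x : Fin N → ℝ | ∀ i, 0 < x i},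
      F (t • x) = t ^ (L + 1) * F x)
    (ν : Fin N → ℝ) (d : ℝ)
    (hω₁ : 0 < (∑ i, ν i) - (L : ℝ) * d / 2)
    (hω₂ : (∑ i, ν i) - (L : ℝ) * d / 2 < d / 2) :
    ENNReal.ofReal (Real.Gamma (d / 2)) *
        ∫⁻ x in {x : Fin N → ℝ | ∀ i, 0 < x i},
          ENNReal.ofReal ((∏ i, x i ^ (ν i - 1)) * (U x + F x) ^ (-(d / 2)))
      = ENNReal.ofReal (Real.Gamma (d / 2 - ((∑ i, ν i) - (L : ℝ) * d / 2))) *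
        ∫⁻ x in {x : Fin N → ℝ | ∀ i, 0 < x i},
          ENNReal.ofReal ((∏ i, x i ^ (ν i - 1)) * U x ^ (-(d / 2)) *
            Real.exp (-(F x / U x))) :=
  stmt_2_general hL U F hUcont hFcont hUpos hFpos hUhom hFhom ν d hω₁ hω₂
end

section
/- (Matrix-derivative identity eq. (A.12) from the algebraic proof of Lemma A.2.) With the matrix data below: for all indices 1 ≤ i, j, r, s ≤ L, one has Σ_{a,b=1}^{N} C^{bi}_{aj} · x_a · ∂_b Λ_{r,s} = Λ_{i,r}·δ_{j,s} + Λ_{i,s}·δ_{j,r}, as an identity in the polynomial ring ℂ[x_1,…,x_N]. -/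
open Finset

noncomputable section

/-- Kronecker delta, valued in `ℂ`. -/
def kd {α : Type*} [DecidableEq α] (i j : α) : ℂ := if i = j then 1 else 0

/-- Embedding of the loop indices `{1,…,L}` into `{1,…,M}`, `M = L + E`. -/
abbrev li {L : ℕ} (E : ℕ) (i : Fin L) : Fin (L + E) := Fin.castAdd E i

/-- Embedding of the external indices `{L+1,…,M}` into `{1,…,M}`. -/
abbrev xi (L : ℕ) {E : ℕ} (r : Fin E) : Fin (L + E) := Fin.natAdd L r

/-- The symmetric `L×L` matrix `Λ(x)` with entries
`Λ_{ij} = −((1+δ_{ij})/2)·Σ_a x_a·A_a^{{i,j}}`. -/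
def LamMat {L E n : ℕ} (A : Fin n → Fin (L + E) → Fin (L + E) → ℂ) :
    Matrix (Fin L) (Fin L) (MvPolynomial (Fin n) ℂ) := fun i j =>
  MvPolynomial.C (-(1 + kd i j) / 2) *
    ∑ a, MvPolynomial.C (A a (li E i) (li E j)) * MvPolynomial.X a

/-- The coefficients `C^{bi}_{aj}` of the momentum-space IBP relations:
`C^{bi}_{aj} = Σ_{m=1}^{M} A_a^{{i,m}} A^b_{{m,j}} (1+δ_{mi})` for `j ≤ L`, and
`C^{bi}_{aj} = Σ_{m=1}^{L} A_a^{{i,m}} A^b_{{m,j}} (1+δ_{mi})` for `j > L`. -/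
def Cc {L E n : ℕ} (A : Fin n → Fin (L + E) → Fin (L + E) → ℂ)
    (B : Fin (L + E) → Fin (L + E) → Fin n → ℂ)
    (b : Fin n) (i : Fin L) (a : Fin n) (j : Fin (L + E)) : ℂ :=
  if (j : ℕ) < L then
    ∑ m : Fin (L + E), A a (li E i) m * B m j b * (1 + kd m (li E i))
  else
    ∑ m ∈ univ.filter (fun m : Fin (L + E) => (m : ℕ) < L),
      A a (li E i) m * B m j b * (1 + kd m (li E i))


/-! `Λ(x)` is linear in `x`, so `∂_b Λ_{rs}` is the constant `-(1+δ_{rs})/2 · A_b^{{r,s}}`.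
Summing `C^{bi}_{aj}` against it over `b` contracts `A^b_{{m,j}}` with `A_b^{{r,s}}`, which by
`A⁻¹ A = 1` on `Θ` keeps only `m = r` (if `j = s`) and `m = s` (if `j = r`); what is left is
the coefficient of `x_a` in `δ_{js} Λ_{ir} + δ_{jr} Λ_{is}`. -/

open MvPolynomial

namespace MvPolynomial

theorem pderiv_sum_C_mul_X {R σ : Type*} [CommSemiring R] [Fintype σ] [DecidableEq σ]
    (c : σ → R) (b : σ) : pderiv b (∑ a, C (c a) * X a) = C (c b) := by
  simp [pderiv_X, Pi.single_apply]

theorem C_mul_sum_C_mul_X_add {R σ : Type*} [CommSemiring R] [Fintype σ]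
    (k k' : R) (c c' : σ → R) :
    C k * ∑ a, C (c a) * X a + C k' * ∑ a, C (c' a) * X a
      = ∑ a, C (k * c a + k' * c' a) * (X a : MvPolynomial σ R) := by
  simp only [mul_sum, ← sum_add_distrib, map_add, map_mul, add_mul, mul_assoc]

theorem sum_sum_C_mul_X_mul_C {R σ : Type*} [CommSemiring R] [Fintype σ]
    (g : σ → σ → R) (d : σ → R) :
    ∑ a, ∑ b, C (g b a) * X a * C (d b)
      = ∑ a, C (∑ b, g b a * d b) * (X a : MvPolynomial σ R) := by
  refine sum_congr rfl fun a _ => ?_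
  rw [map_sum, sum_mul]
  exact sum_congr rfl fun b _ => by rw [map_mul]; ring

end MvPolynomial

theorem kd_comm {α : Type*} [DecidableEq α] (i j : α) : kd i j = kd j i := by
  simp [kd, eq_comm]

theorem kd_li {L : ℕ} (E : ℕ) (i j : Fin L) : kd (li E i) (li E j) = kd i j := by
  simp [kd]

/-- The factor `1 + δ_{rs}` compensates for the two disjuncts coinciding when `r = s`. -/
theorem one_add_kd_mul_sum_pair_delta {ι : Type*} [Fintype ι] [DecidableEq ι]
    (f : ι → ℂ) (j r s : ι) :
    (1 + kd r s) * ∑ m, f m * (if (m = r ∧ j = s) ∨ (m = s ∧ j = r) then 1 else 0)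
      = kd j s * f r + kd j r * f s := by
  by_cases hrs : r = s
  · subst hrs
    simp only [or_self, mul_ite, mul_one, mul_zero, ite_and, sum_ite_eq', mem_univ,
      if_true, kd]
    split_ifs <;> ring
  · have hsplit : ∀ m, (if (m = r ∧ j = s) ∨ (m = s ∧ j = r) then (1 : ℂ) else 0)
        = (if m = r then kd j s else 0) + (if m = s then kd j r else 0) := by
      intro m
      by_cases hmr : m = r <;> by_cases hms : m = s <;> simp_all [kd]
    simp only [hsplit, mul_add, mul_ite, mul_zero, sum_add_distrib, sum_ite_eq', mem_univ,
      if_true, kd, hrs, if_false]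
    split_ifs <;> ring

section LoopMatrix

variable {L E n : ℕ} (A : Fin n → Fin (L + E) → Fin (L + E) → ℂ)

def lamCoeff (u v : Fin L) (a : Fin n) : ℂ := -(1 + kd u v) / 2 * A a (li E u) (li E v)

theorem LamMat_eq_sum (u v : Fin L) :
    LamMat A u v = ∑ a, C (lamCoeff A u v a) * X a := by
  simp only [LamMat, lamCoeff, mul_sum, map_mul, mul_assoc]

theorem pderiv_LamMat (u v : Fin L) (b : Fin n) :
    pderiv b (LamMat A u v) = C (lamCoeff A u v b) := by
  rw [LamMat_eq_sum, pderiv_sum_C_mul_X]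

variable (B : Fin (L + E) → Fin (L + E) → Fin n → ℂ)

theorem Cc_li (b : Fin n) (i : Fin L) (a : Fin n) (j : Fin L) :
    Cc A B b i a (li E j)
      = ∑ m, A a (li E i) m * B m (li E j) b * (1 + kd m (li E i)) := by
  simp [Cc]

theorem sum_Cc_mul_lamCoeff
    (hBA : ∀ i j k l : Fin (L + E), ((i : ℕ) < L ∨ (j : ℕ) < L) →
      ((k : ℕ) < L ∨ (l : ℕ) < L) →
      ∑ a, B i j a * A a k l = if (i = k ∧ j = l) ∨ (i = l ∧ j = k) then 1 else 0)
    (i j r s : Fin L) (a : Fin n) :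
    ∑ b, Cc A B b i a (li E j) * lamCoeff A r s b
      = kd j s * lamCoeff A i r a + kd j r * lamCoeff A i s a := by
  set f : Fin (L + E) → ℂ := fun m => -(1 + kd m (li E i)) / 2 * A a (li E i) m
  have hf : ∀ u, f (li E u) = lamCoeff A i u a := fun u => by
    simp only [f, lamCoeff, kd_li, kd_comm u i]
  have hcontract : ∀ m, ∑ b, B m (li E j) b * A b (li E r) (li E s)
      = if (m = li E r ∧ li E j = li E s) ∨ (m = li E s ∧ li E j = li E r) then 1 else 0 :=
    fun m => hBA _ _ _ _ (Or.inr (by simp)) (Or.inl (by simp))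
  calc ∑ b, Cc A B b i a (li E j) * lamCoeff A r s b
      = (1 + kd (li E r) (li E s)) * ∑ m, f m * ∑ b, B m (li E j) b * A b (li E r) (li E s) := by
        simp only [Cc_li, lamCoeff, f, sum_mul, mul_sum, kd_li]
        rw [sum_comm]
        exact sum_congr rfl fun m _ => sum_congr rfl fun b _ => by ring
    _ = kd j s * lamCoeff A i r a + kd j r * lamCoeff A i s a := by
        simp only [hcontract]
        rw [one_add_kd_mul_sum_pair_delta, kd_li, kd_li, hf, hf]

end LoopMatrix

theorem stmt_8_general {L E n : ℕ}
    (A : Fin n → Fin (L + E) → Fin (L + E) → ℂ)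
    (B : Fin (L + E) → Fin (L + E) → Fin n → ℂ)
    (hBA : ∀ i j k l : Fin (L + E), ((i : ℕ) < L ∨ (j : ℕ) < L) →
      ((k : ℕ) < L ∨ (l : ℕ) < L) →
      ∑ a, B i j a * A a k l = if (i = k ∧ j = l) ∨ (i = l ∧ j = k) then 1 else 0)
    (i j r s : Fin L) :
    ∑ a, ∑ b, MvPolynomial.C (Cc A B b i a (li E j)) * MvPolynomial.X a *
        MvPolynomial.pderiv b (LamMat A r s)
      = MvPolynomial.C (kd j s) * LamMat A i r + MvPolynomial.C (kd j r) * LamMat A i s := by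
  simp only [pderiv_LamMat, sum_sum_C_mul_X_mul_C, sum_Cc_mul_lamCoeff A B hBA,
    LamMat_eq_sum A i, C_mul_sum_C_mul_X_add]

/-- Matrix-derivative identity (A.12):
`Σ_{a,b} C^{bi}_{aj} x_a ∂_b Λ_{r,s} = Λ_{i,r} δ_{j,s} + Λ_{i,s} δ_{j,r}` for loop
indices `i, j, r, s ≤ L`.  Here `A` (entries `A_a^{{i,j}}`, symmetric in the pair) is an
invertible `N×N` matrix with inverse `B` (entries `A^b_{{i,j}} = B i j b`), the rows
indexed by `a ∈ {1,…,N}` and the columns by the unordered pairs `{i,j} ∈ Θ`,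
i.e. pairs with at least one entry ≤ L. -/
theorem stmt_8 {L E n : ℕ} (hL : 1 ≤ L)
    (A : Fin n → Fin (L + E) → Fin (L + E) → ℂ)
    (B : Fin (L + E) → Fin (L + E) → Fin n → ℂ)
    (hAsymm : ∀ a i j, A a i j = A a j i)
    (hBsymm : ∀ i j b, B i j b = B j i b)
    (hn : n = L * (L + 1) / 2 + L * E)
    (hBA : ∀ i j k l : Fin (L + E), ((i : ℕ) < L ∨ (j : ℕ) < L) →
      ((k : ℕ) < L ∨ (l : ℕ) < L) →
      ∑ a, B i j a * A a k l = if (i = k ∧ j = l) ∨ (i = l ∧ j = k) then 1 else 0)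
    (hAB : ∀ a b : Fin n,
      (∑ i ∈ univ.filter (fun i : Fin (L + E) => (i : ℕ) < L),
        ∑ j ∈ univ.filter (fun j : Fin (L + E) => i ≤ j), A a i j * B i j b)
        = if a = b then 1 else 0)
    (i j r s : Fin L) :
    ∑ a, ∑ b, MvPolynomial.C (Cc A B b i a (li E j)) * MvPolynomial.X a *
        MvPolynomial.pderiv b (LamMat A r s)
      = MvPolynomial.C (kd j s) * LamMat A i r + MvPolynomial.C (kd j r) * LamMat A i s :=
  stmt_8_general A B hBA i j r s

end
end

section
/- (Lemma A.2 / Corollary 2.16, case j ≤ L: momentum-space IBP operators are parametric annihilators.) With the full matrix data below: for all 1 ≤ i, j ≤ L, one has Σ_{a,b=1}^{N} C^{bi}_{aj} · x_a · (∂_b 𝒢 − λ_b·𝒰) = 2·δ_{ij}·𝒢, as an identity in the polynomial ring ℂ[x_1,…,x_N]. (This polynomial identity is exactly the statement that the parametric IBP operator P̂_{ij} = d·δ_{ij} + Σ_{a,b} C^{bi}_{aj} x_a(∂_b + λ_b H) annihilates 𝒢^{−d/2}.) -/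
open Finset

noncomputable section

/-- The `L×L` matrix `S` with entries
`S_{ij} = (1/4)·Σ_{a,b} Σ_{r,s>L} g_{rs}·A_a^{{i,r}}·A_b^{{j,s}}·x_a·x_b`. -/
def SMat {L E n : ℕ} (A : Fin n → Fin (L + E) → Fin (L + E) → ℂ)
    (g : Fin E → Fin E → ℂ) :
    Matrix (Fin L) (Fin L) (MvPolynomial (Fin n) ℂ) := fun i j =>
  MvPolynomial.C ((1 : ℂ) / 4) * ∑ a, ∑ b, ∑ r, ∑ s,
    MvPolynomial.C (g r s * A a (li E i) (xi L r) * A b (li E j) (xi L s)) *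
      (MvPolynomial.X a * MvPolynomial.X b)

/-- `J = Σ_a λ_a x_a`. -/
def Jpoly {n : ℕ} (lam : Fin n → ℂ) : MvPolynomial (Fin n) ℂ :=
  ∑ a, MvPolynomial.C (lam a) * MvPolynomial.X a

/-- The second Symanzik polynomial
`ℱ = Σ_{i,j} (adjugate Λ)_{ij}·S_{ji} + 𝒰·J`. -/
def Fpoly {L E n : ℕ} (A : Fin n → Fin (L + E) → Fin (L + E) → ℂ)
    (g : Fin E → Fin E → ℂ) (lam : Fin n → ℂ) : MvPolynomial (Fin n) ℂ :=
  (∑ i, ∑ j, (LamMat A).adjugate i j * SMat A g j i) + (LamMat A).det * Jpoly lam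

/-- The Lee–Pomeransky polynomial `𝒢 = 𝒰 + ℱ`. -/
def Gpoly {L E n : ℕ} (A : Fin n → Fin (L + E) → Fin (L + E) → ℂ)
    (g : Fin E → Fin E → ℂ) (lam : Fin n → ℂ) : MvPolynomial (Fin n) ℂ :=
  (LamMat A).det + Fpoly A g lam

/-!
The operator `D = Σ_{a,b} C^{bi}_{aj} x_a ∂_b` is a derivation. Because `B` is dual to `A`, it acts
on the linear forms `Σ_a A_a^{{k,v}} x_a` (`k ≤ L`) by `D Λ = P Λ + Λ Pᵀ` and `D Π = P Π`, where
`P = E_{ji}` is a matrix unit and `Π` is the `L × E` matrix of loop–external forms; since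
`S = ¼ Π g Πᵀ`, also `D S = P S + S Pᵀ`. For any derivation, `D Λ = P Λ + Λ Q` implies
`D (det Λ) = (tr P + tr Q) det Λ` (Jacobi's formula) and, as `det Λ ≠ 0` (`Λ(x)` is the identity
at `x_a = -Σ_p B^a_{{p,p}}`),
`D (adj Λ) = (tr P + tr Q) adj Λ - adj Λ P - Q adj Λ`, so that `tr (adj Λ S)` is an eigenvector
of `D` with the same eigenvalue `tr P + tr Pᵀ = 2 δ_{ij}`. The terms `λ_b 𝒰` remove exactly the
contribution `𝒰 D J` of `∂_b J = λ_b`, and what remains is `D` applied to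
`𝒰 + tr (adj Λ S) + 𝒰 J`, i.e. to `𝒢` with `J` held fixed.
-/

open Matrix MvPolynomial

namespace Derivation

variable {R A : Type*} [CommSemiring R] [CommRing A] [Algebra R A] (D : Derivation R A A)

theorem leibniz_finset_prod {ι : Type*} [DecidableEq ι] (s : Finset ι) (f : ι → A) :
    D (∏ l ∈ s, f l) = ∑ k ∈ s, (∏ l ∈ s.erase k, f l) * D (f k) := by
  induction s using Finset.induction_on with
  | empty => simp
  | insert a s ha ih =>
    rw [prod_insert ha, leibniz, ih, sum_insert ha, erase_insert ha, smul_eq_mul, smul_eq_mul,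
      mul_sum, add_comm]
    congr 1
    refine sum_congr rfl fun k hk => ?_
    rw [erase_insert_of_ne (ne_of_mem_of_not_mem hk ha).symm,
      prod_insert fun h => ha (mem_of_mem_erase h)]
    ring

section

variable {ι κ μ : Type*}

theorem map_matrix_mul [Fintype κ] (M : Matrix ι κ A) (N : Matrix κ μ A) :
    (M * N).map D = M.map D * N + M * N.map D := by
  ext k l
  simp only [map_apply, mul_apply, Matrix.add_apply, map_sum, leibniz, smul_eq_mul,
    ← sum_add_distrib]
  exact sum_congr rfl fun _ _ => by ring

theorem map_matrix_smul (r : R) (M : Matrix ι κ A) : (r • M).map D = r • M.map D := by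
  ext k l
  simp

theorem map_matrix_map_algebraMap (M : Matrix ι κ R) : (M.map (algebraMap R A)).map D = 0 := by
  ext k l
  simp

theorem map_trace [Fintype ι] (M : Matrix ι ι A) : D M.trace = (M.map D).trace :=
  map_sum D _ _

variable [Fintype ι] [DecidableEq ι]

theorem map_det (M : Matrix ι ι A) : D M.det = (M.adjugate * M.map D).trace := by
  have hcol : ∀ k, (M.updateCol k fun m => D (M m k)).det = ∑ m, M.adjugate k m * D (M m k) := by
    intro k
    rw [← cramer_apply, cramer_eq_adjugate_mulVec]
    rfl
  simp only [trace, diag_apply, mul_apply, map_apply, ← hcol, det_apply, map_sum,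
    Units.smul_def, map_zsmul, leibniz_finset_prod, smul_sum]
  rw [sum_comm]
  refine sum_congr rfl fun k _ => sum_congr rfl fun σ _ => ?_
  rw [← mul_prod_erase univ (fun l => updateCol M k (fun m => D (M m k)) (σ l) l) (mem_univ k),
    mul_comm]
  congr 2
  · simp
  · exact prod_congr rfl fun l hl => by simp [(mem_erase.1 hl).1]

variable {M P Q : Matrix ι ι A}

theorem map_det_of_map_eq (h : M.map D = P * M + M * Q) :
    D M.det = (P.trace + Q.trace) * M.det := by
  rw [map_det, h, Matrix.mul_add, trace_add, trace_mul_comm, Matrix.mul_assoc, mul_adjugate,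
    ← Matrix.mul_assoc, adjugate_mul]
  simp only [Matrix.mul_smul, Matrix.smul_mul, trace_smul, Matrix.mul_one, Matrix.one_mul,
    smul_eq_mul]
  ring

theorem map_adjugate_of_map_eq [IsDomain A] (hdet : M.det ≠ 0) (h : M.map D = P * M + M * Q) :
    M.adjugate.map D = (P.trace + Q.trace) • M.adjugate - M.adjugate * P - Q * M.adjugate := by
  have hprod : M.adjugate.map D * M + M.adjugate * (P * M + M * Q) = D M.det • 1 := by
    rw [← h, ← map_matrix_mul, adjugate_mul, smul_one_eq_diagonal, smul_one_eq_diagonal,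
      diagonal_map (map_zero D)]
  apply smul_right_injective _ hdet
  calc M.det • M.adjugate.map D = M.adjugate.map D * (M * M.adjugate) := by
        rw [mul_adjugate, Matrix.mul_smul, Matrix.mul_one]
    _ = (D M.det • 1 - M.adjugate * (P * M + M * Q)) * M.adjugate := by
        rw [← Matrix.mul_assoc, eq_sub_of_add_eq hprod]
    _ = _ := by
        rw [map_det_of_map_eq D h, Matrix.mul_add, Matrix.sub_mul, Matrix.add_mul,
          Matrix.mul_assoc, Matrix.mul_assoc, mul_adjugate, ← Matrix.mul_assoc M.adjugate M,
          adjugate_mul]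
        simp only [Matrix.smul_mul, Matrix.mul_smul, Matrix.one_mul, Matrix.mul_one]
        module

theorem map_trace_adjugate_mul [IsDomain A] {S : Matrix ι ι A} (hdet : M.det ≠ 0)
    (hM : M.map D = P * M + M * Q) (hS : S.map D = P * S + S * Q) :
    D (M.adjugate * S).trace = (P.trace + Q.trace) * (M.adjugate * S).trace := by
  rw [map_trace, map_matrix_mul, map_adjugate_of_map_eq D hdet hM, hS]
  simp only [Matrix.sub_mul, Matrix.mul_add, Matrix.smul_mul, trace_add, trace_sub, trace_smul,
    Matrix.mul_assoc, smul_eq_mul]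
  rw [trace_mul_comm Q]
  simp only [Matrix.mul_assoc]
  ring

end

end Derivation

namespace Matrix

variable {α l m : Type*} [Semiring α] [Fintype l] [DecidableEq l]

theorem single_one_mul_apply (j i k : l) (M : Matrix l m α) (c : m) :
    (single j i (1 : α) * M) k c = if k = j then M i c else 0 := by
  by_cases h : k = j <;> simp [h]

theorem mul_single_one_apply (i j k : l) (M : Matrix m l α) (c : m) :
    (M * single i j (1 : α)) c k = if k = j then M c i else 0 := by
  by_cases h : k = j <;> simp [h]

end Matrix

namespace MvPolynomial

variable {σ R : Type*} [Fintype σ] [CommSemiring R]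

def linearForm (w : σ → R) : MvPolynomial σ R := ∑ a, C (w a) * X a

theorem linearForm_add (v w : σ → R) : linearForm (v + w) = linearForm v + linearForm w := by
  simp only [linearForm, Pi.add_apply, map_add, add_mul, sum_add_distrib]

theorem C_mul_linearForm (c : R) (w : σ → R) : C c * linearForm w = linearForm (c • w) := by
  simp only [linearForm, mul_sum, Pi.smul_apply, smul_eq_mul, map_mul, mul_assoc]

theorem linearForm_zero : linearForm (0 : σ → R) = 0 := by
  simp [linearForm]

theorem pderiv_linearForm (w : σ → R) (b : σ) : pderiv b (linearForm w) = C (w b) := by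
  classical
  simp [linearForm, pderiv_X, Pi.single_apply]

theorem eval_linearForm (x w : σ → R) : eval x (linearForm w) = w ⬝ᵥ x := by
  simp [linearForm, dotProduct]

def linearDerivation (c : Matrix σ σ R) : Derivation R (MvPolynomial σ R) (MvPolynomial σ R) :=
  ∑ a, ∑ b, (C (c a b) * X a) • pderiv b

theorem linearDerivation_apply (c : Matrix σ σ R) (p : MvPolynomial σ R) :
    linearDerivation c p = ∑ a, ∑ b, C (c a b) * X a * pderiv b p := by
  rw [linearDerivation, ← Derivation.coeFnAddMonoidHom_apply, map_sum, Finset.sum_apply]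
  simp only [map_sum, Finset.sum_apply, Derivation.coeFnAddMonoidHom_apply,
    Derivation.smul_apply, smul_eq_mul]

theorem linearDerivation_linearForm (c : Matrix σ σ R) (w : σ → R) :
    linearDerivation c (linearForm w) = linearForm (c *ᵥ w) := by
  simp only [linearDerivation_apply, pderiv_linearForm]
  simp only [linearForm, mulVec, dotProduct, map_sum, map_mul, sum_mul]
  exact sum_congr rfl fun _ _ => sum_congr rfl fun _ _ => by ring

end MvPolynomial

section IBP

variable {L E n : ℕ} (A : Fin n → Fin (L + E) → Fin (L + E) → ℂ)
  (B : Fin (L + E) → Fin (L + E) → Fin n → ℂ)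

def IsDualOnPairs : Prop :=
  ∀ i j k l : Fin (L + E), ((i : ℕ) < L ∨ (j : ℕ) < L) → ((k : ℕ) < L ∨ (l : ℕ) < L) →
    ∑ a, B i j a * A a k l = if (i = k ∧ j = l) ∨ (i = l ∧ j = k) then 1 else 0

def ibpCoeff (i j : Fin L) : Matrix (Fin n) (Fin n) ℂ :=
  of fun a b => Cc A B b i a (li E j)

def ibpDerivation (i j : Fin L) :
    Derivation ℂ (MvPolynomial (Fin n) ℂ) (MvPolynomial (Fin n) ℂ) :=
  linearDerivation (ibpCoeff A B i j)

def loopExtForms : Matrix (Fin L) (Fin E) (MvPolynomial (Fin n) ℂ) :=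
  Matrix.of fun k r => linearForm fun a => A a (li E k) (xi L r)

variable {A B}

theorem ibpDerivation_apply (i j : Fin L) (p : MvPolynomial (Fin n) ℂ) :
    ibpDerivation A B i j p = ∑ a, ∑ b, C (Cc A B b i a (li E j)) * X a * pderiv b p :=
  linearDerivation_apply _ _

theorem li_ne_xi (k : Fin L) (r : Fin E) : li E k ≠ xi L r := by
  simp [Fin.ext_iff]; omega

theorem ibpCoeff_mulVec_apply (hAB : IsDualOnPairs A B) (i j : Fin L) {u v : Fin (L + E)}
    (huv : (u : ℕ) < L ∨ (v : ℕ) < L) (a : Fin n) :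
    (ibpCoeff A B i j *ᵥ fun b => A b u v) a
      = ∑ m, A a (li E i) m * (1 + kd m (li E i)) *
          if (m = u ∧ li E j = v) ∨ (m = v ∧ li E j = u) then 1 else 0 := by
  simp only [mulVec, dotProduct, ibpCoeff, of_apply, Cc, Fin.val_castAdd, Fin.is_lt, if_true,
    sum_mul]
  rw [sum_comm]
  refine sum_congr rfl fun m _ => ?_
  rw [← hAB m (li E j) u v (Or.inr (by simp)) huv, mul_sum]
  exact sum_congr rfl fun b _ => by ring

theorem ibpCoeff_mulVec_loop (hAsymm : ∀ a i j, A a i j = A a j i) (hAB : IsDualOnPairs A B)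
    (i j k l : Fin L) (a : Fin n) :
    -(1 + kd k l) / 2 * (ibpCoeff A B i j *ᵥ fun b => A b (li E k) (li E l)) a
      = (if k = j then -(1 + kd i l) / 2 * A a (li E i) (li E l) else 0)
        + (if l = j then -(1 + kd k i) / 2 * A a (li E k) (li E i) else 0) := by
  -- Duality selects `m = li E l` when `j = k` and `m = li E k` when `j = l`; for `k = l = j` the
  -- single surviving term is compensated by the factor `(1 + δ_{kl}) / 2`.
  rw [ibpCoeff_mulVec_apply hAB i j (Or.inl (by simp)) a]
  simp only [Fin.castAdd_inj]
  rw [hAsymm a (li E k) (li E i)]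
  by_cases hk : k = j <;> by_cases hl : l = j
  all_goals simp [hk, hl, Ne.symm, kd]
  all_goals split_ifs <;> subst_vars <;> first | ring1 | simp_all

theorem ibpCoeff_mulVec_ext (hAB : IsDualOnPairs A B) (i j k : Fin L) (r : Fin E) (a : Fin n) :
    (ibpCoeff A B i j *ᵥ fun b => A b (li E k) (xi L r)) a
      = if k = j then A a (li E i) (xi L r) else 0 := by
  rw [ibpCoeff_mulVec_apply hAB i j (Or.inl (by simp)) a]
  rcases eq_or_ne k j with rfl | hk
  · simp [li_ne_xi, (li_ne_xi _ _).symm, kd]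
  · simp [hk, hk.symm, li_ne_xi]

theorem LamMat_apply_eq_linearForm (k l : Fin L) :
    LamMat A k l = linearForm ((-(1 + kd k l) / 2) • fun a => A a (li E k) (li E l)) :=
  C_mul_linearForm _ _

theorem LamMat_det_ne_zero (hAB : IsDualOnPairs A B) : (LamMat A).det ≠ 0 := by
  set x : Fin n → ℂ := fun a => -∑ p : Fin L, B (li E p) (li E p) a
  have hx : ∀ k l : Fin L, (fun a => A a (li E k) (li E l)) ⬝ᵥ x = -kd k l := by
    intro k l
    have hdual : ∀ p : Fin L, ∑ a, B (li E p) (li E p) a * A a (li E k) (li E l)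
        = if p = k ∧ p = l then 1 else 0 := fun p => by
      rw [hAB _ _ _ _ (Or.inl (by simp)) (Or.inl (by simp))]
      simp [and_comm]
    simp only [dotProduct, x, mul_neg, mul_sum, sum_neg_distrib]
    rw [sum_comm]
    simp only [mul_comm (A _ _ _), hdual]
    rcases eq_or_ne k l with rfl | hkl
    · simp [kd]
    · simp [kd, hkl]
  have hone : (LamMat A).map (eval x) = 1 := by
    ext k l
    rw [map_apply, LamMat_apply_eq_linearForm, eval_linearForm, smul_dotProduct, hx, one_apply]
    by_cases h : k = l <;> simp [h, kd]
  intro h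
  have := congrArg (eval x) h
  rw [RingHom.map_det, RingHom.mapMatrix_apply, hone, det_one, map_zero] at this
  exact one_ne_zero this

theorem LamMat_map_ibpDerivation (hAsymm : ∀ a i j, A a i j = A a j i) (hAB : IsDualOnPairs A B)
    (i j : Fin L) :
    (LamMat A).map (ibpDerivation A B i j)
      = single j i (1 : MvPolynomial (Fin n) ℂ) * LamMat A + LamMat A * (single j i 1)ᵀ := by
  refine Matrix.ext fun k l => ?_
  rw [map_apply, Matrix.add_apply, transpose_single, single_one_mul_apply, mul_single_one_apply,
    LamMat_apply_eq_linearForm, LamMat_apply_eq_linearForm, LamMat_apply_eq_linearForm,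
    ibpDerivation, linearDerivation_linearForm, mulVec_smul,
    ← linearForm_zero, ← apply_ite linearForm, ← apply_ite linearForm, ← linearForm_add]
  congr 1
  ext a
  simpa [apply_ite (fun f : Fin n → ℂ => f a)] using ibpCoeff_mulVec_loop hAsymm hAB i j k l a

theorem loopExtForms_map_ibpDerivation (hAB : IsDualOnPairs A B) (i j : Fin L) :
    (loopExtForms A).map (ibpDerivation A B i j)
      = single j i (1 : MvPolynomial (Fin n) ℂ) * loopExtForms A := by
  refine Matrix.ext fun k r => ?_
  rw [map_apply, single_one_mul_apply, loopExtForms, of_apply, of_apply, ibpDerivation,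
    linearDerivation_linearForm, ← linearForm_zero, ← apply_ite linearForm]
  congr 1
  ext a
  simpa [apply_ite (fun f : Fin n → ℂ => f a)] using ibpCoeff_mulVec_ext hAB i j k r a

theorem SMat_eq_smul_mul (g : Fin E → Fin E → ℂ) :
    SMat A g = (1 / 4 : ℂ) • (loopExtForms A *
      (Matrix.of g).map (C : ℂ → MvPolynomial (Fin n) ℂ) * (loopExtForms A)ᵀ) := by
  refine Matrix.ext fun k l => ?_
  simp only [SMat, Matrix.smul_apply, mul_apply, map_apply, of_apply, transpose_apply,
    loopExtForms, linearForm, smul_eq_C_mul, sum_mul, mul_sum]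
  simp only [sum_comm (γ := Fin n) (α := Fin E)]
  rw [sum_comm]
  refine sum_congr rfl fun s _ => sum_congr rfl fun r _ => ?_
  rw [sum_comm]
  exact sum_congr rfl fun _ _ => sum_congr rfl fun _ _ => by simp only [map_mul]; ring

theorem SMat_map_ibpDerivation (hAB : IsDualOnPairs A B) (i j : Fin L) (g : Fin E → Fin E → ℂ) :
    (SMat A g).map (ibpDerivation A B i j)
      = single j i (1 : MvPolynomial (Fin n) ℂ) * SMat A g + SMat A g * (single j i 1)ᵀ := by
  rw [SMat_eq_smul_mul, Derivation.map_matrix_smul, Derivation.map_matrix_mul,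
    Derivation.map_matrix_mul, transpose_map, loopExtForms_map_ibpDerivation hAB, ← algebraMap_eq,
    Derivation.map_matrix_map_algebraMap]
  simp only [transpose_mul, Matrix.mul_zero, add_zero, Matrix.mul_assoc, Matrix.mul_smul,
    Matrix.smul_mul, smul_add]

end IBP

theorem stmt_10_general {L E n : ℕ}
    (A : Fin n → Fin (L + E) → Fin (L + E) → ℂ)
    (B : Fin (L + E) → Fin (L + E) → Fin n → ℂ)
    (g : Fin E → Fin E → ℂ) (lam : Fin n → ℂ)
    (hAsymm : ∀ a i j, A a i j = A a j i)
    (hBA : ∀ i j k l : Fin (L + E), ((i : ℕ) < L ∨ (j : ℕ) < L) →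
      ((k : ℕ) < L ∨ (l : ℕ) < L) →
      ∑ a, B i j a * A a k l = if (i = k ∧ j = l) ∨ (i = l ∧ j = k) then 1 else 0)
    (i j : Fin L) :
    ∑ a, ∑ b, MvPolynomial.C (Cc A B b i a (li E j)) * MvPolynomial.X a *
        (MvPolynomial.pderiv b (Gpoly A g lam) - MvPolynomial.C (lam b) * (LamMat A).det)
      = MvPolynomial.C (2 * kd i j) * Gpoly A g lam := by
  set D := ibpDerivation A B i j
  have htrace : (single j i (1 : MvPolynomial (Fin n) ℂ)).trace + (single j i 1)ᵀ.trace
      = C (2 * kd i j) := by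
    rw [trace_transpose]
    rcases eq_or_ne i j with rfl | h
    · simp [kd, map_ofNat, one_add_one_eq_two]
    · simp [kd, h, h.symm]
  have hΛ := LamMat_map_ibpDerivation hAsymm hBA i j
  have hU : D (LamMat A).det = C (2 * kd i j) * (LamMat A).det := by
    rw [D.map_det_of_map_eq hΛ, htrace]
  have hF : D ((LamMat A).adjugate * SMat A g).trace
      = C (2 * kd i j) * ((LamMat A).adjugate * SMat A g).trace := by
    rw [D.map_trace_adjugate_mul (LamMat_det_ne_zero hBA) hΛ (SMat_map_ibpDerivation hBA i j g),
      htrace]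
  have hJ : Jpoly lam = linearForm lam := rfl
  have hlhs : ∑ a, ∑ b, C (Cc A B b i a (li E j)) * X a *
        (pderiv b (Gpoly A g lam) - C (lam b) * (LamMat A).det)
      = D (Gpoly A g lam) - (LamMat A).det * D (Jpoly lam) := by
    rw [hJ, ibpDerivation_apply, ibpDerivation_apply, mul_sum]
    simp only [pderiv_linearForm, mul_sub, sum_sub_distrib, mul_sum]
    rw [sub_right_inj]
    exact sum_congr rfl fun _ _ => sum_congr rfl fun _ _ => by ring
  have hF0 : ∑ k, ∑ l, (LamMat A).adjugate k l * SMat A g l k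
      = ((LamMat A).adjugate * SMat A g).trace := rfl
  rw [hlhs, Gpoly, Fpoly, hF0]
  simp only [map_add, Derivation.leibniz, smul_eq_mul, hU, hF]
  ring

/-- Lemma A.2 / Corollary 2.16, case `j ≤ L`: the momentum-space IBP operators are
parametric annihilators, in the form of the polynomial identity
`Σ_{a,b} C^{bi}_{aj} x_a (∂_b 𝒢 − λ_b·𝒰) = 2δ_{ij}·𝒢`. -/
theorem stmt_10 {L E n : ℕ} (hL : 1 ≤ L)
    (A : Fin n → Fin (L + E) → Fin (L + E) → ℂ)
    (B : Fin (L + E) → Fin (L + E) → Fin n → ℂ)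
    (g : Fin E → Fin E → ℂ) (lam : Fin n → ℂ)
    (hAsymm : ∀ a i j, A a i j = A a j i)
    (hBsymm : ∀ i j b, B i j b = B j i b)
    (hgsymm : ∀ r s, g r s = g s r)
    (hn : n = L * (L + 1) / 2 + L * E)
    (hBA : ∀ i j k l : Fin (L + E), ((i : ℕ) < L ∨ (j : ℕ) < L) →
      ((k : ℕ) < L ∨ (l : ℕ) < L) →
      ∑ a, B i j a * A a k l = if (i = k ∧ j = l) ∨ (i = l ∧ j = k) then 1 else 0)
    (hAB : ∀ a b : Fin n,
      (∑ i ∈ univ.filter (fun i : Fin (L + E) => (i : ℕ) < L),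
        ∑ j ∈ univ.filter (fun j : Fin (L + E) => i ≤ j), A a i j * B i j b)
        = if a = b then 1 else 0)
    (i j : Fin L) :
    ∑ a, ∑ b, MvPolynomial.C (Cc A B b i a (li E j)) * MvPolynomial.X a *
        (MvPolynomial.pderiv b (Gpoly A g lam) - MvPolynomial.C (lam b) * (LamMat A).det)
      = MvPolynomial.C (2 * kd i j) * Gpoly A g lam :=
  stmt_10_general A B g lam hAsymm hBA i j
end
end

section
/- (Commutator identity eq. (2.41) from the proof of Proposition 2.28, realized in the Weyl representation.) With the data below (A invertible, g symmetric invertible): for all 1 ≤ i, j, k, l ≤ L, the ℂ-linear endomorphisms of the polynomial ring ℂ[x_1,…,x_N] satisfy the commutator identity [Q(−∂)_{ij}, mul(Λ_{kl}(x))] = ((δ_{ik}·δ_{jl} + δ_{il}·δ_{jk})/2)·id, where Q(−∂)_{ij} is the constant-coefficient differential operator obtained from the polynomial Q(y)_{ij} by substituting y_a ↦ −∂_a. -/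
open Finset

noncomputable section

/-- The substitution `y_a − λ_a ↦ −∂_a − λ_a·id`, as an endomorphism of the
polynomial ring. -/
def opY {n : ℕ} (lam : Fin n → ℂ) (a : Fin n) :
    Module.End ℂ (MvPolynomial (Fin n) ℂ) :=
  -(MvPolynomial.pderiv a).toLinearMap - lam a • 1

/-- Multiplication by a polynomial, as an endomorphism of the polynomial ring. -/
def mulOp {n : ℕ} (p : MvPolynomial (Fin n) ℂ) :
    Module.End ℂ (MvPolynomial (Fin n) ℂ) :=
  LinearMap.mulLeft ℂ p

/-- The operator `Q(−∂)_{ij}` obtained from the polynomial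
`Q(y)_{ij} = Σ_a A^a_{{i,j}}(y_a−λ_a) − Σ_{a,b}Σ_{r,s>L} A^a_{{i,r}}(y_a−λ_a)(g⁻¹)_{rs}A^b_{{j,s}}(y_b−λ_b)`
by substituting `y_a ↦ −∂_a`. -/
def Qop {L E n : ℕ} (B : Fin (L + E) → Fin (L + E) → Fin n → ℂ)
    (ginv : Fin E → Fin E → ℂ) (lam : Fin n → ℂ) (i j : Fin L) :
    Module.End ℂ (MvPolynomial (Fin n) ℂ) :=
  (∑ a, B (li E i) (li E j) a • opY lam a)
    - ∑ a, ∑ b, ∑ r, ∑ s,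
        (B (li E i) (xi L r) a * ginv r s * B (li E j) (xi L s) b) •
          (opY lam a * opY lam b)

/-! `Λ_{kl}(x)` is linear in `x`, so its commutator with each `−∂_a − λ_a` is a scalar; hence
the commutator with a first-order operator `Σ_a v_a(−∂_a − λ_a)` is the scalar
`((1+δ_{kl})/2) Σ_a v_a A_a^{{k,l}}`, and that with a product of two such operators is a
combination of the two factors. Since `A⁻¹ A = id`, the scalar is `(δ_{ik}δ_{jl} + δ_{il}δ_{jk})/2`
for `v = A^·_{{i,j}}` and vanishes for `v = A^·_{{i,r}}` with `r > L`, which kills the quadratic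
part of `Q`. -/

open MvPolynomial

section Commutator

variable (R : Type*) {A : Type*} [CommRing R] [Ring A] [Algebra R A]

/-- Mathlib's `⁅x, m⁆` on an associative ring is built from `Ring.instBracket`, which the `LieRingModule` lemmas (`sum_lie`, `smul_lie`) do not match syntactically; as a linear map
the commutator gets `map_sum` and `map_smul` for free. -/
def commutatorWith (m : A) : A →ₗ[R] A :=
  LinearMap.mulRight R m - LinearMap.mulLeft R m

variable {R}

theorem commutatorWith_apply (m x : A) : commutatorWith R m x = x * m - m * x := rfl

theorem commutatorWith_mul_of_eq_smul_one {m x y : A} {α β : R}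
    (hx : commutatorWith R m x = α • 1) (hy : commutatorWith R m y = β • 1) :
    commutatorWith R m (x * y) = β • x + α • y := calc
  commutatorWith R m (x * y) = x * commutatorWith R m y + commutatorWith R m x * y := by
    simp only [commutatorWith_apply]; noncomm_ring
  _ = β • x + α • y := by
    rw [hx, hy, mul_smul_comm, mul_one, smul_mul_assoc, one_mul]

end Commutator

section WeylOperators

variable {n : ℕ}

def opYComb (lam v : Fin n → ℂ) : Module.End ℂ (MvPolynomial (Fin n) ℂ) :=
  ∑ a, v a • opY lam a

theorem mulOp_C (r : ℂ) : mulOp (C r : MvPolynomial (Fin n) ℂ) = r • 1 :=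
  LinearMap.ext fun q => by simp [mulOp, smul_eq_C_mul]

theorem commutatorWith_mulOp_opY (lam : Fin n → ℂ) (a : Fin n) (P : MvPolynomial (Fin n) ℂ) :
    commutatorWith ℂ (mulOp P) (opY lam a) = mulOp (-pderiv a P) := by
  refine LinearMap.ext fun q => ?_
  simp only [commutatorWith_apply, opY, mulOp, LinearMap.sub_apply, Module.End.mul_apply,
    LinearMap.neg_apply, LinearMap.smul_apply, Module.End.one_apply,
    LinearMap.mulLeft_apply, Derivation.coeFn_coe, pderiv_mul, smul_eq_C_mul]
  ring

theorem commutatorWith_mulOp_opYComb (lam v : Fin n → ℂ) {P : MvPolynomial (Fin n) ℂ}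
    {c : Fin n → ℂ} (hP : ∀ a, pderiv a P = C (-c a)) :
    commutatorWith ℂ (mulOp P) (opYComb lam v) = (∑ a, v a * c a) • 1 := by
  simp only [opYComb, map_sum, map_smul, commutatorWith_mulOp_opY, hP, ← map_neg, neg_neg, mulOp_C,
    smul_smul, ← Finset.sum_smul]

variable {L E : ℕ} (A : Fin n → Fin (L + E) → Fin (L + E) → ℂ)

theorem pderiv_LamMat_s12 (k l : Fin L) (a : Fin n) :
    pderiv a (LamMat A k l) = C (-((1 + kd k l) / 2 * A a (li E k) (li E l))) := by
  simp only [LamMat, pderiv_C_mul, map_sum, pderiv_X, Pi.single_apply, mul_ite, mul_one,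
    mul_zero, Finset.sum_ite_eq', Finset.mem_univ, if_true, ← C_mul, neg_div, neg_mul]

theorem commutatorWith_mulOp_LamMat_opYComb (lam v : Fin n → ℂ) (k l : Fin L) :
    commutatorWith ℂ (mulOp (LamMat A k l)) (opYComb lam v)
      = ((1 + kd k l) / 2 * ∑ a, v a * A a (li E k) (li E l)) • 1 := by
  rw [commutatorWith_mulOp_opYComb lam v (pderiv_LamMat_s12 A k l), Finset.mul_sum]
  congr 1
  exact Finset.sum_congr rfl fun a _ => by ring

theorem Qop_eq_opYComb (B : Fin (L + E) → Fin (L + E) → Fin n → ℂ)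
    (ginv : Fin E → Fin E → ℂ) (lam : Fin n → ℂ) (i j : Fin L) :
    Qop B ginv lam i j = opYComb lam (B (li E i) (li E j))
      - ∑ r, ∑ t, ginv r t •
          (opYComb lam (B (li E i) (xi L r)) * opYComb lam (B (li E j) (xi L t))) := by
  simp only [Qop, opYComb, Finset.sum_mul_sum, smul_mul_smul_comm, Finset.smul_sum, smul_smul]
  congr 1
  calc _ = ∑ a, ∑ r, ∑ t, ∑ b, (ginv r t * (B (li E i) (xi L r) a * B (li E j) (xi L t) b)) •
          (opY lam a * opY lam b) := Finset.sum_congr rfl fun a _ => by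
        rw [Finset.sum_comm]
        refine Finset.sum_congr rfl fun r _ => ?_
        rw [Finset.sum_comm]
        exact Finset.sum_congr rfl fun t _ => Finset.sum_congr rfl fun b _ => by ring_nf
    _ = _ := by
        rw [Finset.sum_comm]
        exact Finset.sum_congr rfl fun r _ => Finset.sum_comm

end WeylOperators

theorem one_add_kd_div_two_mul_ite_pair {α : Type*} [DecidableEq α] (i j k l : α) :
    (1 + kd k l) / 2 * (if (i = k ∧ j = l) ∨ (i = l ∧ j = k) then (1 : ℂ) else 0)
      = (kd i k * kd j l + kd i l * kd j k) / 2 := by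
  unfold kd
  split_ifs <;> simp_all

theorem stmt_12_general {L E n : ℕ}
    (A : Fin n → Fin (L + E) → Fin (L + E) → ℂ)
    (B : Fin (L + E) → Fin (L + E) → Fin n → ℂ)
    (ginv : Fin E → Fin E → ℂ) (lam : Fin n → ℂ)
    (hBA : ∀ i j k l : Fin (L + E), ((i : ℕ) < L ∨ (j : ℕ) < L) →
      ((k : ℕ) < L ∨ (l : ℕ) < L) →
      ∑ a, B i j a * A a k l = if (i = k ∧ j = l) ∨ (i = l ∧ j = k) then 1 else 0)
    (i j k l : Fin L) :
    Qop B ginv lam i j * mulOp (LamMat A k l) - mulOp (LamMat A k l) * Qop B ginv lam i j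
      = ((kd i k * kd j l + kd i l * kd j k) / 2) •
          (1 : Module.End ℂ (MvPolynomial (Fin n) ℂ)) := by
  have hloop : (1 + kd k l) / 2 * ∑ a, B (li E i) (li E j) a * A a (li E k) (li E l)
      = (kd i k * kd j l + kd i l * kd j k) / 2 := by
    rw [hBA _ _ _ _ (Or.inl i.isLt) (Or.inl k.isLt), ← one_add_kd_div_two_mul_ite_pair]
    simp only [Fin.castAdd_inj]
  have hext : ∀ (p : Fin L) (r : Fin E),
      ∑ a, B (li E p) (xi L r) a * A a (li E k) (li E l) = 0 := fun p r => by
    rw [hBA _ _ _ _ (Or.inl p.isLt) (Or.inl k.isLt), if_neg]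
    simp only [Fin.ext_iff, Fin.val_castAdd, Fin.val_natAdd]
    omega
  have hcomm := commutatorWith_mulOp_LamMat_opYComb A lam (k := k) (l := l)
  rw [← commutatorWith_apply (R := ℂ), Qop_eq_opYComb, map_sub, hcomm, hloop]
  simp only [map_sum, map_smul, commutatorWith_mul_of_eq_smul_one (hcomm _) (hcomm _), hext,
    mul_zero, zero_smul, add_zero, smul_zero, Finset.sum_const_zero, sub_zero]

/-- Commutator identity (2.41) realized in the Weyl representation:
`[Q(−∂)_{ij}, mul(Λ_{kl})] = ((δ_{ik}δ_{jl} + δ_{il}δ_{jk})/2)·id`. -/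
theorem stmt_12 {L E n : ℕ} (hL : 1 ≤ L) (hE : 1 ≤ E)
    (A : Fin n → Fin (L + E) → Fin (L + E) → ℂ)
    (B : Fin (L + E) → Fin (L + E) → Fin n → ℂ)
    (g ginv : Fin E → Fin E → ℂ) (lam : Fin n → ℂ)
    (hAsymm : ∀ a i j, A a i j = A a j i)
    (hBsymm : ∀ i j b, B i j b = B j i b)
    (hgsymm : ∀ r s, g r s = g s r)
    (hginv : ∀ r s, ∑ t, g r t * ginv t s = if r = s then 1 else 0)
    (hinvg : ∀ r s, ∑ t, ginv r t * g t s = if r = s then 1 else 0)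
    (hn : n = L * (L + 1) / 2 + L * E)
    (hBA : ∀ i j k l : Fin (L + E), ((i : ℕ) < L ∨ (j : ℕ) < L) →
      ((k : ℕ) < L ∨ (l : ℕ) < L) →
      ∑ a, B i j a * A a k l = if (i = k ∧ j = l) ∨ (i = l ∧ j = k) then 1 else 0)
    (hAB : ∀ a b : Fin n,
      (∑ i ∈ univ.filter (fun i : Fin (L + E) => (i : ℕ) < L),
        ∑ j ∈ univ.filter (fun j : Fin (L + E) => i ≤ j), A a i j * B i j b)
        = if a = b then 1 else 0)
    (i j k l : Fin L) :
    Qop B ginv lam i j * mulOp (LamMat A k l) - mulOp (LamMat A k l) * Qop B ginv lam i j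
      = ((kd i k * kd j l + kd i l * kd j k) / 2) •
          (1 : Module.End ℂ (MvPolynomial (Fin n) ℂ)) :=
  stmt_12_general A B ginv lam hBA i j k l
end
end

section
/- (One-loop bubble integral, eqs. (2.12)/(2.14).) For all real a, b, c, p with a > 0, b > 0, p > 0, a < c, b < c and a + b > c, one has ∫_0^∞ ∫_0^∞ x^{a−1} · y^{b−1} · (x + y + p·x·y)^{−c} dx dy = p^{c−a−b} · Γ(c−a) · Γ(c−b) · Γ(a+b−c) / Γ(c). (With a = ν_1, b = ν_2, c = d/2 and p = −p² this is the evaluation of the Lee–Pomeransky parametric representation of the one-loop massless bubble in terms of Gamma functions.) -/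
/-!
Since `x + y + p x y = (1 + p x) y + x`, both the inner and the outer integral have the form
`∫₀^∞ t^(s-1) (α t + β)^(-c) dt`, which the substitutions `t ↦ (β/α) t` and `t ↦ t / (1 + t)` turn
into Euler's Beta integral `B(s, c-s)` times `α^(-s) β^(s-c)`. The inner integral is thus
`B(b, c-b) x^(a+b-c-1) (1 + p x)^(-b)`, the outer one `p^(c-a-b) B(a+b-c, c-a)`, and `Γ(b)` cancels
in the product. Fubini applies because the integrand is nonnegative.
-/

open MeasureTheory Set Real ProbabilityTheory

lemma ofReal_cpow_mul_one_sub_cpow {s t x : ℝ} (hx : x ∈ Ioc (0 : ℝ) 1) :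
    (x : ℂ) ^ ((s : ℂ) - 1) * (1 - (x : ℂ)) ^ ((t : ℂ) - 1) =
      ((x ^ (s - 1) * (1 - x) ^ (t - 1) : ℝ) : ℂ) := by
  push_cast [Complex.ofReal_cpow hx.1.le, Complex.ofReal_cpow (sub_nonneg.2 hx.2)]
  rfl

lemma integrableOn_cpow_mul_one_sub_cpow {s t : ℝ} (hs : 0 < s) (ht : 0 < t) :
    IntegrableOn (fun x : ℝ ↦ (x : ℂ) ^ ((s : ℂ) - 1) * (1 - (x : ℂ)) ^ ((t : ℂ) - 1))
      (Ioc 0 1) :=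
  (intervalIntegrable_iff_integrableOn_Ioc_of_le zero_le_one).1 <|
    Complex.betaIntegral_convergent (by simpa) (by simpa)

lemma integrableOn_rpow_mul_one_sub_rpow {s t : ℝ} (hs : 0 < s) (ht : 0 < t) :
    IntegrableOn (fun x : ℝ ↦ x ^ (s - 1) * (1 - x) ^ (t - 1)) (Ioc 0 1) := by
  refine IntegrableOn.congr_fun (f := fun x : ℝ ↦ RCLike.re _)
    (integrableOn_cpow_mul_one_sub_cpow hs ht).re (fun x hx ↦ ?_) measurableSet_Ioc
  simp only [ofReal_cpow_mul_one_sub_cpow hx, RCLike.re_to_complex, Complex.ofReal_re]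

lemma integral_rpow_mul_one_sub_rpow {s t : ℝ} (hs : 0 < s) (ht : 0 < t) :
    ∫ x in Ioc (0 : ℝ) 1, x ^ (s - 1) * (1 - x) ^ (t - 1) = beta s t := by
  rw [beta_eq_betaIntegralReal s t hs ht, Complex.betaIntegral,
    intervalIntegral.integral_of_le zero_le_one, ← RCLike.re_to_complex,
    ← integral_re (integrableOn_cpow_mul_one_sub_cpow hs ht)]
  refine setIntegral_congr_fun measurableSet_Ioc fun x hx ↦ ?_
  simp only [ofReal_cpow_mul_one_sub_cpow hx, RCLike.re_to_complex, Complex.ofReal_re]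

lemma hasDerivAt_div_one_add {x : ℝ} (hx : 1 + x ≠ 0) :
    HasDerivAt (fun x : ℝ ↦ x / (1 + x)) ((1 + x) ^ 2)⁻¹ x := by
  have h := (hasDerivAt_id' x).div ((hasDerivAt_id' x).const_add 1) hx
  rwa [show (1 * (1 + x) - x * 1) / (1 + x) ^ 2 = ((1 + x) ^ 2)⁻¹ by ring] at h

lemma hasDerivWithinAt_div_one_add {x : ℝ} (hx : x ∈ Ioi 0) :
    HasDerivWithinAt (fun x : ℝ ↦ x / (1 + x)) ((1 + x) ^ 2)⁻¹ (Ioi 0) x :=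
  (hasDerivAt_div_one_add (by have : (0 : ℝ) < x := hx; positivity)).hasDerivWithinAt

lemma injOn_div_one_add : InjOn (fun x : ℝ ↦ x / (1 + x)) (Ioi 0) := by
  intro x (hx : 0 < x) y (hy : 0 < y) hxy
  have hx1 : 1 + x ≠ 0 := by positivity
  have hy1 : 1 + y ≠ 0 := by positivity
  field_simp at hxy
  linarith

lemma image_div_one_add_Ioi : (fun x : ℝ ↦ x / (1 + x)) '' Ioi 0 = Ioo 0 1 := by
  ext u
  simp only [mem_image, mem_Ioi, mem_Ioo]
  constructor
  · rintro ⟨x, hx, rfl⟩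
    exact ⟨by positivity, (div_lt_one (by positivity)).2 (by linarith)⟩
  · rintro ⟨hu0, hu1⟩
    refine ⟨u / (1 - u), div_pos hu0 (by linarith), ?_⟩
    have : 1 - u ≠ 0 := by linarith
    field_simp
    ring

lemma abs_deriv_smul_beta_integrand {s c x : ℝ} (hx : 0 < x) :
    |((1 + x) ^ 2)⁻¹| • ((x / (1 + x)) ^ (s - 1) * (1 - x / (1 + x)) ^ (c - s - 1)) =
      x ^ (s - 1) * (1 + x) ^ (-c) := by
  have h1x : 0 < 1 + x := by linarith
  rw [show 1 - x / (1 + x) = (1 + x)⁻¹ by field_simp; ring, div_rpow hx.le h1x.le,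
    inv_rpow h1x.le, abs_of_pos (by positivity), smul_eq_mul, ← rpow_natCast, ← rpow_neg h1x.le,
    ← rpow_neg h1x.le, div_eq_mul_inv, ← rpow_neg h1x.le]
  calc _ = x ^ (s - 1) * ((1 + x) ^ (-((2 : ℕ) : ℝ)) * (1 + x) ^ (-(s - 1)) *
        (1 + x) ^ (-(c - s - 1))) := by ring
    _ = _ := by rw [← rpow_add h1x, ← rpow_add h1x]; congr 2; push_cast; ring

lemma integrableOn_rpow_mul_one_add_rpow_neg {s c : ℝ} (hs : 0 < s) (hsc : s < c) :
    IntegrableOn (fun x : ℝ ↦ x ^ (s - 1) * (1 + x) ^ (-c)) (Ioi 0) := by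
  have h := (integrableOn_rpow_mul_one_sub_rpow hs (sub_pos.2 hsc)).mono_set Ioo_subset_Ioc_self
  rw [← image_div_one_add_Ioi, integrableOn_image_iff_integrableOn_abs_deriv_smul
    measurableSet_Ioi (fun _ ↦ hasDerivWithinAt_div_one_add) injOn_div_one_add] at h
  exact h.congr_fun (fun x hx ↦ abs_deriv_smul_beta_integrand hx) measurableSet_Ioi

lemma integral_rpow_mul_one_add_rpow_neg {s c : ℝ} (hs : 0 < s) (hsc : s < c) :
    ∫ x in Ioi (0 : ℝ), x ^ (s - 1) * (1 + x) ^ (-c) = beta s (c - s) := by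
  rw [← integral_rpow_mul_one_sub_rpow hs (sub_pos.2 hsc), integral_Ioc_eq_integral_Ioo,
    ← image_div_one_add_Ioi, integral_image_eq_integral_abs_deriv_smul measurableSet_Ioi
    (fun _ ↦ hasDerivWithinAt_div_one_add) injOn_div_one_add]
  exact setIntegral_congr_fun measurableSet_Ioi fun x hx ↦ (abs_deriv_smul_beta_integrand hx).symm

lemma rpow_mul_add_rpow_neg_eq {s c A B x : ℝ} (hA : 0 < A) (hB : 0 < B) (hx : 0 < x) :
    x ^ (s - 1) * (A * x + B) ^ (-c) =
      A ^ (-s) * B ^ (s - c) * (A / B) * ((A / B * x) ^ (s - 1) * (1 + A / B * x) ^ (-c)) := by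
  have hAxB : 0 < A * x + B := by positivity
  rw [mul_rpow (div_pos hA hB).le hx.le, show 1 + A / B * x = (A * x + B) / B by field_simp; ring,
    div_rpow hAxB.le hB.le, div_rpow hA.le hB.le, rpow_neg hA.le, rpow_sub hB,
    rpow_sub_one hA.ne', rpow_sub_one hB.ne', rpow_neg hAxB.le, rpow_neg hB.le]
  field_simp

lemma integrableOn_rpow_mul_add_rpow_neg {s c A B : ℝ} (hs : 0 < s) (hsc : s < c)
    (hA : 0 < A) (hB : 0 < B) :
    IntegrableOn (fun x : ℝ ↦ x ^ (s - 1) * (A * x + B) ^ (-c)) (Ioi 0) := by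
  have h := (integrableOn_Ioi_comp_mul_left_iff _ 0 (div_pos hA hB)).2
    (by simpa using integrableOn_rpow_mul_one_add_rpow_neg hs hsc)
  exact IntegrableOn.congr_fun (h.const_mul (A ^ (-s) * B ^ (s - c) * (A / B)))
    (fun x hx ↦ (rpow_mul_add_rpow_neg_eq hA hB hx).symm) measurableSet_Ioi

lemma integral_rpow_mul_add_rpow_neg {s c A B : ℝ} (hs : 0 < s) (hsc : s < c)
    (hA : 0 < A) (hB : 0 < B) :
    ∫ x in Ioi (0 : ℝ), x ^ (s - 1) * (A * x + B) ^ (-c) =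
      A ^ (-s) * B ^ (s - c) * beta s (c - s) := by
  rw [setIntegral_congr_fun measurableSet_Ioi fun x hx ↦ rpow_mul_add_rpow_neg_eq hA hB hx,
    integral_const_mul, integral_comp_mul_left_Ioi (fun u ↦ u ^ (s - 1) * (1 + u) ^ (-c)) 0
    (div_pos hA hB), mul_zero, integral_rpow_mul_one_add_rpow_neg hs hsc, smul_eq_mul]
  field_simp

theorem integral_prod_of_nonneg {α β : Type*} [MeasurableSpace α] [MeasurableSpace β]
    {μ : Measure α} {ν : Measure β} [SFinite μ] [SFinite ν] {f : α × β → ℝ} {g : α → ℝ}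
    (hf : AEStronglyMeasurable f (μ.prod ν)) (hf0 : ∀ᵐ x ∂μ, 0 ≤ᵐ[ν] fun y ↦ f (x, y))
    (hfx : ∀ᵐ x ∂μ, Integrable (fun y ↦ f (x, y)) ν)
    (hfg : ∀ᵐ x ∂μ, ∫ y, f (x, y) ∂ν = g x) (hg : Integrable g μ) :
    ∫ z, f z ∂(μ.prod ν) = ∫ x, g x ∂μ := by
  have hint : Integrable f (μ.prod ν) := by
    refine (integrable_prod_iff hf).2 ⟨hfx, hg.congr ?_⟩
    filter_upwards [hf0, hfg] with x hx0 hxg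
    rw [← hxg]
    exact integral_congr_ae (hx0.mono fun y hy ↦ (norm_of_nonneg hy).symm)
  rw [integral_prod f hint]
  exact integral_congr_ae hfg

section Bubble

variable {a b c p x : ℝ}

lemma bubble_integrand_eq (y : ℝ) :
    x ^ (a - 1) * y ^ (b - 1) * (x + y + p * x * y) ^ (-c) =
      x ^ (a - 1) * (y ^ (b - 1) * ((1 + p * x) * y + x) ^ (-c)) := by
  rw [show (1 + p * x) * y + x = x + y + p * x * y by ring]
  ring

lemma integrableOn_bubble_integrand (hb : 0 < b) (hbc : b < c) (hp : 0 < p) (hx : 0 < x) :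
    IntegrableOn (fun y ↦ x ^ (a - 1) * y ^ (b - 1) * (x + y + p * x * y) ^ (-c)) (Ioi 0) := by
  simp_rw [bubble_integrand_eq]
  exact (integrableOn_rpow_mul_add_rpow_neg hb hbc (by positivity) hx).const_mul _

lemma integral_bubble_integrand (hb : 0 < b) (hbc : b < c) (hp : 0 < p) (hx : 0 < x) :
    ∫ y in Ioi 0, x ^ (a - 1) * y ^ (b - 1) * (x + y + p * x * y) ^ (-c) =
      beta b (c - b) * (x ^ (a + b - c - 1) * (p * x + 1) ^ (-b)) := by
  simp_rw [bubble_integrand_eq]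
  rw [integral_const_mul, integral_rpow_mul_add_rpow_neg hb hbc (by positivity) hx,
    add_comm (p * x), show a + b - c - 1 = (a - 1) + (b - c) by ring, rpow_add hx]
  ring

end Bubble

theorem stmt_16_general (a b c p : ℝ) (hb : 0 < b) (hp : 0 < p)
    (hac : a < c) (hbc : b < c) (habc : c < a + b) :
    ∫ z in Set.Ioi (0 : ℝ) ×ˢ Set.Ioi (0 : ℝ),
        z.1 ^ (a - 1) * z.2 ^ (b - 1) * (z.1 + z.2 + p * z.1 * z.2) ^ (-c)
      = p ^ (c - a - b) * Real.Gamma (c - a) * Real.Gamma (c - b) *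
          Real.Gamma (a + b - c) / Real.Gamma c := by
  rw [Measure.volume_eq_prod, ← Measure.prod_restrict, integral_prod_of_nonneg
    (g := fun x ↦ beta b (c - b) * (x ^ (a + b - c - 1) * (p * x + 1) ^ (-b))) (by fun_prop)]
  · rw [integral_const_mul, integral_rpow_mul_add_rpow_neg (by linarith) (by linarith) hp one_pos,
      one_rpow, beta, beta, show b - (a + b - c) = c - a by ring, show b + (c - b) = c by ring,
      show a + b - c + (c - a) = b by ring, show -(a + b - c) = c - a - b by ring]
    field_simp
  · refine ae_restrict_of_forall_mem measurableSet_Ioi fun x (hx : 0 < x) ↦ ?_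
    refine ae_restrict_of_forall_mem measurableSet_Ioi fun y (hy : 0 < y) ↦ ?_
    positivity
  · exact ae_restrict_of_forall_mem measurableSet_Ioi fun x hx ↦
      integrableOn_bubble_integrand hb hbc hp hx
  · exact ae_restrict_of_forall_mem measurableSet_Ioi fun x hx ↦
      integral_bubble_integrand hb hbc hp hx
  · exact (integrableOn_rpow_mul_add_rpow_neg (by linarith) (by linarith) hp one_pos).const_mul _

/-- The one-loop bubble integral (eqs. (2.12)/(2.14)):
`∫_0^∞ ∫_0^∞ x^{a−1} y^{b−1} (x + y + p·x·y)^{−c} dx dy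
  = p^{c−a−b} Γ(c−a) Γ(c−b) Γ(a+b−c) / Γ(c)`. -/
theorem stmt_16 (a b c p : ℝ) (ha : 0 < a) (hb : 0 < b) (hp : 0 < p)
    (hac : a < c) (hbc : b < c) (habc : c < a + b) :
    ∫ z in Set.Ioi (0 : ℝ) ×ˢ Set.Ioi (0 : ℝ),
        z.1 ^ (a - 1) * z.2 ^ (b - 1) * (z.1 + z.2 + p * z.1 * z.2) ^ (-c)
      = p ^ (c - a - b) * Real.Gamma (c - a) * Real.Gamma (c - b) *
          Real.Gamma (a + b - c) / Real.Gamma c :=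
  stmt_16_general a b c p hb hp hac hbc habc
end

section
/- (Rank formula for finitely generated modules over k[X]; the final reduction in the proof of Theorem B.3.) Let k be a field and let M be a finitely generated module over the polynomial ring k[X]. Let t : M → M denote the k-linear map given by multiplication by X. Then the k-vector spaces M/t(M) and ker(t) are finite dimensional, and dim_{k(X)} (k(X) ⊗_{k[X]} M) = dim_k (M / t(M)) − dim_k (ker t), where k(X) is the field of rational functions (the fraction field of k[X]). -/
/-!
By the structure theorem, `M ≅ k[X]ⁿ × T` with `T` a finite direct sum of modules
`k[X] ⧸ (f)`, so `T` is finite-dimensional over `k`. The dimension of `k(X) ⊗ M` is the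
`k[X]`-rank of `M`, and the formula `rank = dim coker t - dim ker t` (with finiteness of both
sides) is stable under isomorphisms and finite products. It holds for `k[X]`, where `t` is
injective with cokernel `k`, and for a finite-dimensional `T`: such a `T` is torsion, so has
rank `0`, while `dim coker t = dim ker t` by rank–nullity.
-/

open Polynomial Module LinearMap

namespace Submodule

variable {R M M' : Type*} [Ring R] [AddCommGroup M] [Module R M] [AddCommGroup M'] [Module R M']

def prodEquiv (p : Submodule R M) (q : Submodule R M') : p.prod q ≃ₗ[R] p × q where
  toFun x := (⟨x.1.1, x.2.1⟩, ⟨x.1.2, x.2.2⟩)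
  invFun y := ⟨(y.1, y.2), y.1.2, y.2.2⟩
  map_add' _ _ := rfl
  map_smul' _ _ := rfl

noncomputable def quotientProdEquiv (p : Submodule R M) (q : Submodule R M') :
    ((M × M') ⧸ p.prod q) ≃ₗ[R] (M ⧸ p) × (M' ⧸ q) :=
  (quotEquivOfEq _ _ (by rw [ker_prodMap, ker_mkQ, ker_mkQ])).trans
    ((p.mkQ.prodMap q.mkQ).quotKerEquivOfSurjective
      (Prod.map_surjective.2 ⟨p.mkQ_surjective, q.mkQ_surjective⟩))

end Submodule

theorem Module.finrank_prod_of_isDomain {R M M' : Type*} [CommRing R] [IsDomain R]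
    [AddCommGroup M] [Module R M] [AddCommGroup M'] [Module R M']
    [Module.Finite R M] [Module.Finite R M'] :
    finrank R (M × M') = finrank R M + finrank R M' := by
  rw [← Submodule.finrank_quotient_add_finrank (ker (snd R M M')),
    ((snd R M M').quotKerEquivOfSurjective snd_surjective).finrank_eq, ker_snd,
    ← (LinearEquiv.ofInjective _ inl_injective).finrank_eq, add_comm]

section RankFormula

variable (k : Type*) [Field k]

noncomputable abbrev mulX (N : Type*) [AddCommGroup N] [Module k N] [Module k[X] N]
    [IsScalarTower k k[X] N] : N →ₗ[k] N :=
  (lsmul k[X] N X).restrictScalars k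

structure SatisfiesRankFormula (N : Type*) [AddCommGroup N] [Module k N] [Module k[X] N]
    [IsScalarTower k k[X] N] : Prop where
  finiteDimensional_ker : FiniteDimensional k (ker (mulX k N))
  finiteDimensional_coker : FiniteDimensional k (N ⧸ range (mulX k N))
  finrank_eq :
    (finrank k[X] N : ℤ) = finrank k (N ⧸ range (mulX k N)) - finrank k (ker (mulX k N))

variable {k} {N N' : Type*} [AddCommGroup N] [Module k N] [Module k[X] N] [IsScalarTower k k[X] N]
  [AddCommGroup N'] [Module k N'] [Module k[X] N'] [IsScalarTower k k[X] N']

theorem map_ker_mulX (e : N ≃ₗ[k[X]] N') :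
    (ker (mulX k N)).map (e.restrictScalars k : N →ₗ[k] N') = ker (mulX k N') := by
  ext y
  rw [Submodule.map_equiv_eq_comap_symm]
  simp [← map_smul]

theorem map_range_mulX (e : N ≃ₗ[k[X]] N') :
    (range (mulX k N)).map (e.restrictScalars k : N →ₗ[k] N') = range (mulX k N') := by
  ext y
  simp only [Submodule.mem_map, mem_range, restrictScalars_apply, lsmul_apply,
    LinearEquiv.coe_coe, LinearEquiv.restrictScalars_apply]
  constructor
  · rintro ⟨_, ⟨z, rfl⟩, rfl⟩
    exact ⟨e z, (map_smul e X z).symm⟩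
  · rintro ⟨z, rfl⟩
    exact ⟨X • e.symm z, ⟨e.symm z, rfl⟩, by rw [map_smul, e.apply_symm_apply]⟩

theorem SatisfiesRankFormula.of_linearEquiv (h : SatisfiesRankFormula k N) (e : N ≃ₗ[k[X]] N') :
    SatisfiesRankFormula k N' := by
  have eKer := LinearEquiv.ofSubmodules (e.restrictScalars k) _ _ (map_ker_mulX e)
  have eCoker := Submodule.Quotient.equiv _ _ (e.restrictScalars k) (map_range_mulX e)
  have := h.finiteDimensional_ker
  have := h.finiteDimensional_coker
  exact ⟨eKer.finiteDimensional, eCoker.finiteDimensional, by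
    rw [← e.finrank_eq, ← eKer.finrank_eq, ← eCoker.finrank_eq, h.finrank_eq]⟩

theorem mulX_prod : mulX k (N × N') = (mulX k N).prodMap (mulX k N') := rfl

theorem SatisfiesRankFormula.prod [Module.Finite k[X] N] [Module.Finite k[X] N']
    (h : SatisfiesRankFormula k N) (h' : SatisfiesRankFormula k N') :
    SatisfiesRankFormula k (N × N') := by
  have eKer : ker (mulX k (N × N')) ≃ₗ[k] ker (mulX k N) × ker (mulX k N') :=
    (LinearEquiv.ofEq _ _ (by rw [mulX_prod, ker_prodMap])).trans (Submodule.prodEquiv _ _)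
  have eCoker : ((N × N') ⧸ range (mulX k (N × N'))) ≃ₗ[k]
      (N ⧸ range (mulX k N)) × (N' ⧸ range (mulX k N')) :=
    (Submodule.quotEquivOfEq _ _ (by rw [mulX_prod, range_prodMap])).trans
      (Submodule.quotientProdEquiv _ _)
  have := h.finiteDimensional_ker
  have := h.finiteDimensional_coker
  have := h'.finiteDimensional_ker
  have := h'.finiteDimensional_coker
  refine ⟨eKer.symm.finiteDimensional, eCoker.symm.finiteDimensional, ?_⟩
  rw [finrank_prod_of_isDomain, eKer.finrank_eq, eCoker.finrank_eq, finrank_prod, finrank_prod]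
  push_cast
  rw [h.finrank_eq, h'.finrank_eq]
  ring

variable (k) in
theorem ker_mulX_polynomial : ker (mulX k k[X]) = ⊥ :=
  ker_eq_bot.2 fun _ _ h ↦ mul_left_cancel₀ X_ne_zero h

variable (k) in
theorem range_mulX_polynomial : range (mulX k k[X]) = ker (lcoeff k 0) := by
  ext f
  rw [mem_range, mem_ker, lcoeff_apply, ← X_dvd_iff]
  exact ⟨fun ⟨g, hg⟩ ↦ ⟨g, hg.symm⟩, fun ⟨g, hg⟩ ↦ ⟨g, hg.symm⟩⟩

theorem satisfiesRankFormula_polynomial : SatisfiesRankFormula k k[X] := by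
  have eCoker : (k[X] ⧸ range (mulX k k[X])) ≃ₗ[k] k :=
    (Submodule.quotEquivOfEq _ _ (range_mulX_polynomial k)).trans
      ((lcoeff k 0).quotKerEquivOfSurjective fun a ↦ ⟨C a, coeff_C_zero⟩)
  refine ⟨by rw [ker_mulX_polynomial]; infer_instance, eCoker.symm.finiteDimensional, ?_⟩
  rw [ker_mulX_polynomial, finrank_bot, eCoker.finrank_eq, finrank_self, finrank_self]
  norm_num

theorem isTorsion_of_finiteDimensional [FiniteDimensional k N] : Module.IsTorsion k[X] N := by
  intro x
  obtain ⟨a, ha, hax⟩ : ∃ a : k[X], a ≠ 0 ∧ a • x = 0 := by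
    by_contra! h
    have hinj : Function.Injective ((toSpanSingleton k[X] N x).restrictScalars k) :=
      (injective_iff_map_eq_zero _).2 fun a hax ↦ by_contra (h a · hax)
    have := Module.Finite.of_injective _ hinj
    exact transcendental_X k (Algebra.IsIntegral.isIntegral X).isAlgebraic
  exact ⟨⟨a, mem_nonZeroDivisors_of_ne_zero ha⟩, hax⟩

theorem SatisfiesRankFormula.of_finiteDimensional [FiniteDimensional k N] :
    SatisfiesRankFormula k N := by
  refine ⟨inferInstance, inferInstance, ?_⟩
  have := (mulX k N).finrank_range_add_finrank_ker
  have := (range (mulX k N)).finrank_quotient_add_finrank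
  rw [isTorsion_of_finiteDimensional.finrank_eq_zero]
  omega

theorem satisfiesRankFormula_pi : ∀ n : ℕ, SatisfiesRankFormula k (Fin n → k[X])
  | 0 => .of_finiteDimensional
  | n + 1 => (satisfiesRankFormula_polynomial.prod (satisfiesRankFormula_pi n)).of_linearEquiv
      (Fin.consLinearEquiv k[X] fun _ ↦ k[X])

theorem SatisfiesRankFormula.of_finite [Module.Finite k[X] N] : SatisfiesRankFormula k N := by
  obtain ⟨n, ι, _, p, hp, e, ⟨eqv⟩⟩ := Module.equiv_free_prod_directSum k[X] N
  have : ∀ i, FiniteDimensional k (k[X] ⧸ k[X] ∙ p i ^ e i) := fun i ↦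
    (AdjoinRoot.powerBasis (pow_ne_zero _ (hp i).ne_zero)).finite
  have hFree := (satisfiesRankFormula_pi n).of_linearEquiv
    (Finsupp.linearEquivFunOnFinite k[X] k[X] (Fin n)).symm
  exact (hFree.prod .of_finiteDimensional).of_linearEquiv eqv.symm

end RankFormula

/-- Rank formula for finitely generated modules over `k[X]` (the final reduction in the
proof of Theorem B.3): for a finitely generated `k[X]`-module `M` with `t : M → M`
multiplication by `X`, the `k`-vector spaces `ker t` and `M/t(M)` are finite
dimensional and `dim_{k(X)} (k(X) ⊗_{k[X]} M) = dim_k (M/t(M)) − dim_k (ker t)`. -/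
theorem stmt_18 {k : Type*} [Field k] (M : Type*) [AddCommGroup M]
    [Module k M] [Module (Polynomial k) M] [IsScalarTower k (Polynomial k) M]
    [Module.Finite (Polynomial k) M] :
    FiniteDimensional k
        (LinearMap.ker ((LinearMap.lsmul (Polynomial k) M Polynomial.X).restrictScalars k)) ∧
      FiniteDimensional k
        (M ⧸ LinearMap.range
          ((LinearMap.lsmul (Polynomial k) M Polynomial.X).restrictScalars k)) ∧
      (Module.finrank (FractionRing (Polynomial k))
          (TensorProduct (Polynomial k) (FractionRing (Polynomial k)) M) : ℤ)
        = (Module.finrank k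
            (M ⧸ LinearMap.range
              ((LinearMap.lsmul (Polynomial k) M Polynomial.X).restrictScalars k)) : ℤ)
          - (Module.finrank k
              (LinearMap.ker
                ((LinearMap.lsmul (Polynomial k) M Polynomial.X).restrictScalars k)) : ℤ) := by
  have h := SatisfiesRankFormula.of_finite (k := k) (N := M)
  refine ⟨h.finiteDimensional_ker, h.finiteDimensional_coker, ?_⟩
  rw [(TensorProduct.isBaseChange k[X] M (FractionRing k[X])).finrank_eq]
  exact h.finrank_eq
end

section
/- (Surjectivity of D on its power-torsion subspace; key step in Appendix B.) Let V be a vector space over a field of characteristic zero, and let X, D : V → V be linear maps satisfying the Weyl commutation relation D∘X − X∘D = id_V. Let N := { v ∈ V : D^k v = 0 for some k ∈ ℕ }. Then N is stable under both X and D, and the restriction of D to N is surjective onto N, i.e. D(N) = N. -/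
/-!
From `D X - X D = 1` one gets `D^(k+1) X = X D^(k+1) + (k+1) D^k`, so `X` maps `ker D^k` into
`ker D^(k+1)`. For surjectivity, induct on `k`: if `D^(k+1) v = 0`, the same formula shows that
`w = v - (k+1)⁻¹ D X v` lies in `ker D^k`, so `w = D u` with `u ∈ ker D^(k+1)`, and then
`v = D (u + (k+1)⁻¹ X v)`. Characteristic zero is what makes `k+1` invertible.
-/

theorem pow_succ_mul_eq_of_mul_sub_mul_eq_one {R : Type*} [Ring R] {D X : R}
    (h : D * X - X * D = 1) (k : ℕ) :
    D ^ (k + 1) * X = X * D ^ (k + 1) + (k + 1) • D ^ k := by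
  have hDX : D * X = X * D + 1 := by rw [← h]; abel
  induction k with
  | zero => simpa using hDX
  | succ k ih =>
    calc D ^ (k + 1 + 1) * X = D * (D ^ (k + 1) * X) := by rw [pow_succ' D (k + 1), mul_assoc]
      _ = (X * D + 1) * D ^ (k + 1) + (k + 1) • D ^ (k + 1) := by
        rw [ih, mul_add, ← mul_assoc, hDX, mul_smul_comm, ← pow_succ']
      _ = X * D ^ (k + 1 + 1) + (k + 1 + 1) • D ^ (k + 1) := by
        rw [add_mul, one_mul, mul_assoc, ← pow_succ', succ_nsmul' _ (k + 1)]; abel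

namespace Module.End

section Ring

variable {R V : Type*} [Ring R] [AddCommGroup V] [Module R V] {X D : Module.End R V}

theorem pow_succ_apply_of_mul_sub_mul_eq_one (h : D * X - X * D = 1) (k : ℕ) (v : V) :
    (D ^ (k + 1)) (X v) = X ((D ^ (k + 1)) v) + (k + 1) • (D ^ k) v := by
  rw [← mul_apply, pow_succ_mul_eq_of_mul_sub_mul_eq_one h]
  rfl

theorem pow_succ_apply_eq_zero_of_mul_sub_mul_eq_one (h : D * X - X * D = 1) {k : ℕ} {v : V}
    (hv : (D ^ k) v = 0) : (D ^ (k + 1)) (X v) = 0 := by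
  rw [pow_succ_apply_of_mul_sub_mul_eq_one h, hv, smul_zero, add_zero, pow_succ', mul_apply, hv,
    map_zero, map_zero]

end Ring

theorem exists_apply_eq_of_mul_sub_mul_eq_one {K V : Type*} [DivisionRing K] [CharZero K]
    [AddCommGroup V] [Module K V] {X D : Module.End K V} (h : D * X - X * D = 1) {k : ℕ} {v : V}
    (hv : (D ^ k) v = 0) : ∃ u, (D ^ (k + 1)) u = 0 ∧ D u = v := by
  induction k generalizing v with
  | zero => exact ⟨0, map_zero _, by simpa using hv.symm⟩
  | succ k ih =>
    set c : K := ((k : K) + 1)⁻¹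
    have hc : c * ((k : K) + 1) = 1 := inv_mul_cancel₀ (Nat.cast_add_one_ne_zero k)
    have hw : (D ^ k) (v - c • D (X v)) = 0 := by
      rw [map_sub, map_smul, ← mul_apply, ← pow_succ, pow_succ_apply_of_mul_sub_mul_eq_one h, hv,
        map_zero, zero_add, ← Nat.cast_smul_eq_nsmul K, smul_smul, Nat.cast_add_one, hc, one_smul,
        sub_self]
    obtain ⟨u, hu, hDu⟩ := ih hw
    refine ⟨u + c • X v, ?_, ?_⟩
    · rw [map_add, map_smul, pow_succ_apply_eq_zero_of_mul_sub_mul_eq_one h hv, smul_zero,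
        add_zero, pow_succ', mul_apply, hu, map_zero]
    · rw [map_add, map_smul, hDu, sub_add_cancel]

end Module.End

/-- Surjectivity of `D` on its power-torsion subspace (key step in Appendix B):
if `X, D` are linear endomorphisms of a vector space `V` over a field of
characteristic zero with `D∘X − X∘D = id`, then
`N = {v | ∃ k, D^k v = 0}` is stable under `X` and `D`, and `D(N) = N`. -/
theorem stmt_19 {F V : Type*} [Field F] [CharZero F] [AddCommGroup V] [Module F V]
    (X D : Module.End F V) (h : D * X - X * D = 1) :
    (∀ v ∈ {v : V | ∃ k : ℕ, (D ^ k) v = 0}, X v ∈ {v : V | ∃ k : ℕ, (D ^ k) v = 0}) ∧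
      (∀ v ∈ {v : V | ∃ k : ℕ, (D ^ k) v = 0}, D v ∈ {v : V | ∃ k : ℕ, (D ^ k) v = 0}) ∧
      D '' {v : V | ∃ k : ℕ, (D ^ k) v = 0} = {v : V | ∃ k : ℕ, (D ^ k) v = 0} := by
  set N := {v : V | ∃ k : ℕ, (D ^ k) v = 0}
  have hD : ∀ v ∈ N, D v ∈ N := by
    rintro v ⟨k, hk⟩
    exact ⟨k, by rw [← Module.End.mul_apply, ← pow_succ, pow_succ', Module.End.mul_apply, hk,
      map_zero]⟩
  refine ⟨?_, hD, subset_antisymm (Set.image_subset_iff.mpr hD) ?_⟩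
  · rintro v ⟨k, hk⟩
    exact ⟨k + 1, Module.End.pow_succ_apply_eq_zero_of_mul_sub_mul_eq_one h hk⟩
  · rintro v ⟨k, hk⟩
    obtain ⟨u, hu, rfl⟩ := Module.End.exists_apply_eq_of_mul_sub_mul_eq_one h hk
    exact ⟨u, ⟨k + 1, hu⟩, rfl⟩
end
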